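/- arXiv:2309.02018 — 7 statements merged into one kernel-verified Lean document; each statement's English description precedes it below -/
import Mathlib

section
/- Let n ∈ ℕ, let r₁,…,rₙ > 0 with Σᵢ rᵢ = 1, let β > 0, and let I₀ ⊂ ℝ be a compact interval. Let φ : I₀ → ℝⁿ be continuous. Suppose (E_q)_{q∈ℕ} is a decreasing sequence of subsets of I₀ (E_{q+1} ⊆ E_q) and δ > 0 is such that for every integer q > 8 and every x ∈ E_q, every nonzero vector of the lattice a(βq)·u(φ(x))·ℤ^{n+1} has Euclidean norm at least δ. Then there exists ξ > 0 such that for every q ∈ ℕ, every x ∈ E_q, and every real t with 0 < t ≤ q, every nonzero vector of the lattice a(βt)·u(φ(x))·ℤ^{n+1} has Euclidean norm at least ξ. -/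
/- STATEMENT 5: uniform boundedness (Lemma `bounded`): from non-divergence at
integer times along a decreasing family, uniform non-divergence at all times. -/

open Set Matrix

/-- the diagonal matrix `a(t) = diag(e^t, e^{-r₁ t}, …, e^{-rₙ t})`. -/
noncomputable def aMat (n : ℕ) (r : Fin n → ℝ) (t : ℝ) :
    Matrix (Fin (n + 1)) (Fin (n + 1)) ℝ :=
  Matrix.diagonal (Fin.cases (Real.exp t) (fun i => Real.exp (-(r i * t))))

/-- the unipotent matrix `u(y)` with first row `(1, y₁, …, yₙ)`, identity below. -/
def uMat (n : ℕ) (y : Fin n → ℝ) : Matrix (Fin (n + 1)) (Fin (n + 1)) ℝ :=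
  Matrix.of fun i j =>
    if i = j then 1
    else if i = 0 then Fin.cases 0 (fun j' => y j') j
    else 0

/-- Euclidean norm on `ℝ^{n+1}`. -/
noncomputable def euclNorm {n : ℕ} (w : Fin (n + 1) → ℝ) : ℝ :=
  Real.sqrt (∑ i, (w i) ^ 2)

lemma mulVec_eq (n : ℕ) (r : Fin n → ℝ) (s : ℝ) (y : Fin n → ℝ) (c : Fin (n+1) → ℝ) :
    (aMat n r s * uMat n y).mulVec c =
      Fin.cases (Real.exp s * (c 0 + ∑ j, y j * c j.succ))
        (fun i' => Real.exp (-(r i' * s)) * c i'.succ) := by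
  rw [← Matrix.mulVec_mulVec]
  funext i
  have hu : (uMat n y).mulVec c = Fin.cases (c 0 + ∑ j, y j * c j.succ) (fun i' => c i'.succ) := by
    funext i
    induction i using Fin.cases with
    | zero =>
      have h0 : ∀ x : Fin n, (0 : Fin (n+1)) ≠ x.succ := fun x => (Fin.succ_ne_zero x).symm
      simp [uMat, Matrix.mulVec, dotProduct, Fin.sum_univ_succ, h0]
    | succ i' =>
      simp [uMat, Matrix.mulVec, dotProduct, Fin.sum_univ_succ, Fin.succ_ne_zero]
  rw [hu]
  induction i using Fin.cases with
  | zero => simp [aMat, Matrix.mulVec_diagonal]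
  | succ i' => simp [aMat, Matrix.mulVec_diagonal]

lemma component_le_euclNorm {n : ℕ} (w : Fin (n + 1) → ℝ) (i : Fin (n + 1)) :
    |w i| ≤ euclNorm w := by
  rw [euclNorm, ← Real.sqrt_sq_eq_abs]
  apply Real.sqrt_le_sqrt
  exact Finset.single_le_sum (fun j _ => sq_nonneg (w j)) (Finset.mem_univ i)

lemma base_lb (n : ℕ) (r : Fin n → ℝ) (hr_pos : ∀ i, 0 < r i) (hr_sum : ∑ i, r i = 1)
    (s : ℝ) (hs : 0 ≤ s) (y : Fin n → ℝ) (v : Fin (n + 1) → ℤ) (hv : v ≠ 0) :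
    Real.exp (-s) ≤ euclNorm ((aMat n r s * uMat n y).mulVec (fun j => (v j : ℝ))) := by
  have hr1 : ∀ i, r i ≤ 1 := by
    intro i
    rw [← hr_sum]
    exact Finset.single_le_sum (fun j _ => (hr_pos j).le) (Finset.mem_univ i)
  rw [mulVec_eq]
  by_cases hvs : ∀ j : Fin n, v j.succ = 0
  · -- then v 0 ≠ 0
    have hv0 : v 0 ≠ 0 := by
      intro h0
      apply hv
      funext i
      induction i using Fin.cases with
      | zero => exact h0
      | succ i' => exact hvs i'
    calc Real.exp (-s) ≤ 1 := Real.exp_le_one_iff.mpr (by linarith)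
      _ ≤ |Real.exp s * ((v 0 : ℝ) + ∑ j, y j * (v j.succ : ℝ))| := by
          have : ((v 0 : ℝ) + ∑ j, y j * (v j.succ : ℝ)) = (v 0 : ℝ) := by
            simp [hvs]
          rw [this, abs_mul, abs_of_pos (Real.exp_pos s)]
          have h1 : (1:ℝ) ≤ |(v 0 : ℝ)| := by
            rw [← Int.cast_abs]
            exact_mod_cast Int.one_le_abs hv0
          nlinarith [Real.one_le_exp hs]
      _ ≤ _ := by
          have := component_le_euclNorm
            (Fin.cases (Real.exp s * ((v 0:ℝ) + ∑ j, y j * (v j.succ:ℝ)))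
              (fun i' => Real.exp (-(r i' * s)) * (v i'.succ : ℝ))) 0
          simpa using this
  · push_neg at hvs
    obtain ⟨j, hj⟩ := hvs
    calc Real.exp (-s) ≤ Real.exp (-(r j * s)) := by
          apply Real.exp_le_exp.mpr
          nlinarith [hr_pos j, hr1 j]
      _ ≤ |Real.exp (-(r j * s)) * (v j.succ : ℝ)| := by
          rw [abs_mul, abs_of_pos (Real.exp_pos _)]
          have h1 : (1:ℝ) ≤ |(v j.succ : ℝ)| := by
            rw [← Int.cast_abs]
            exact_mod_cast Int.one_le_abs hj
          nlinarith [Real.exp_pos (-(r j * s))]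
      _ ≤ _ := by
          have := component_le_euclNorm
            (Fin.cases (Real.exp s * ((v 0:ℝ) + ∑ j, y j * (v j.succ:ℝ)))
              (fun i' => Real.exp (-(r i' * s)) * (v i'.succ : ℝ))) j.succ
          simpa using this

lemma compare_lb (n : ℕ) (r : Fin n → ℝ) (hr_pos : ∀ i, 0 < r i) (hr_sum : ∑ i, r i = 1)
    (s t : ℝ) (y : Fin n → ℝ) (c : Fin (n + 1) → ℝ) :
    Real.exp (-|t - s|) * euclNorm ((aMat n r s * uMat n y).mulVec c)
      ≤ euclNorm ((aMat n r t * uMat n y).mulVec c) := by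
  have hr1 : ∀ i, r i ≤ 1 := by
    intro i
    rw [← hr_sum]
    exact Finset.single_le_sum (fun j _ => (hr_pos j).le) (Finset.mem_univ i)
  set K := Real.exp (-|t - s|) with hK
  have hK0 : 0 ≤ K := (Real.exp_pos _).le
  rw [mulVec_eq, mulVec_eq, euclNorm, euclNorm]
  rw [← Real.sqrt_sq hK0, ← Real.sqrt_mul (sq_nonneg K)]
  apply Real.sqrt_le_sqrt
  rw [Finset.mul_sum]
  apply Finset.sum_le_sum
  intro i _
  -- termwise: K^2 * (w_s i)^2 ≤ (w_t i)^2
  induction i using Fin.cases with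
  | zero =>
    simp only [Fin.cases_zero]
    have key : Real.exp t = Real.exp (t - s) * Real.exp s := by
      rw [← Real.exp_add]; ring_nf
    have h1 : K ≤ Real.exp (t - s) := Real.exp_le_exp.mpr (neg_abs_le _)
    rw [key]
    have e1 := Real.exp_pos s
    have e2 := Real.exp_pos (t - s)
    nlinarith [sq_nonneg (c 0 + ∑ j, y j * c j.succ), sq_nonneg ((Real.exp (t-s) - K) * (Real.exp s * (c 0 + ∑ j, y j * c j.succ)))]
  | succ i' =>
    simp only [Fin.cases_succ]
    have key : Real.exp (-(r i' * t)) = Real.exp (-(r i' * (t - s))) * Real.exp (-(r i' * s)) := by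
      rw [← Real.exp_add]; ring_nf
    have h1 : K ≤ Real.exp (-(r i' * (t - s))) := by
      apply Real.exp_le_exp.mpr
      have : |r i' * (t - s)| ≤ |t - s| := by
        rw [abs_mul, abs_of_pos (hr_pos i')]
        nlinarith [abs_nonneg (t - s), hr1 i', hr_pos i']
      have h2 := le_abs_self (r i' * (t - s))
      linarith
    rw [key]
    have e1 := Real.exp_pos (-(r i' * s))
    have e2 := Real.exp_pos (-(r i' * (t - s)))
    nlinarith [sq_nonneg (c i'.succ), sq_nonneg ((Real.exp (-(r i' * (t-s))) - K) * (Real.exp (-(r i' * s)) * c i'.succ))]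

theorem stmt5 (n : ℕ) (r : Fin n → ℝ) (hr_pos : ∀ i, 0 < r i)
    (hr_sum : ∑ i, r i = 1) (β : ℝ) (hβ : 0 < β)
    (a b : ℝ) (hab : a ≤ b)
    (φ : ℝ → Fin n → ℝ) (hφ_cont : ContinuousOn φ (Icc a b))
    (E : ℕ → Set ℝ) (hE_sub : ∀ q, E q ⊆ Icc a b)
    (hE_dec : ∀ q, E (q + 1) ⊆ E q)
    (δ : ℝ) (hδ : 0 < δ)
    (h : ∀ q : ℕ, 8 < q → ∀ x ∈ E q, ∀ v : Fin (n + 1) → ℤ, v ≠ 0 →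
      δ ≤ euclNorm ((aMat n r (β * q) * uMat n (φ x)).mulVec (fun j => (v j : ℝ)))) :
    ∃ ξ > 0, ∀ q : ℕ, ∀ x ∈ E q, ∀ t : ℝ, 0 < t → t ≤ q →
      ∀ v : Fin (n + 1) → ℤ, v ≠ 0 →
        ξ ≤ euclNorm ((aMat n r (β * t) * uMat n (φ x)).mulVec (fun j => (v j : ℝ))) := by
  have hmono : Antitone E := antitone_nat_of_succ_le hE_dec
  refine ⟨min (Real.exp (-(8*β))) (δ * Real.exp (-(9*β))), ?_, ?_⟩
  · apply lt_min (Real.exp_pos _)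
    exact mul_pos hδ (Real.exp_pos _)
  intro q x hx t ht htq v hv
  by_cases hq : q ≤ 8
  · have h8 : t ≤ 8 := htq.trans (by exact_mod_cast hq)
    have hb := base_lb n r hr_pos hr_sum (β*t) (by positivity) (φ x) v hv
    have hexp : Real.exp (-(8*β)) ≤ Real.exp (-(β*t)) := Real.exp_le_exp.mpr (by nlinarith)
    exact le_trans (min_le_left _ _) (hexp.trans hb)
  · push_neg at hq
    set m := max 9 ⌈t⌉₊ with hm
    have h8m : 8 < m := lt_of_lt_of_le (by norm_num) (le_max_left _ _)
    have hmq : m ≤ q := max_le (by omega) (Nat.ceil_le.mpr htq)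
    have hxm : x ∈ E m := hmono hmq hx
    have hδm := h m h8m x hxm v hv
    have htm1 : t ≤ (m:ℝ) := le_trans (Nat.le_ceil t)
      (by exact_mod_cast Nat.cast_le.mpr (le_max_right 9 ⌈t⌉₊))
    have htm2 : (m:ℝ) ≤ t + 9 := by
      have hc : (⌈t⌉₊:ℝ) ≤ t + 1 := (Nat.ceil_lt_add_one ht.le).le
      have hcast : (m:ℝ) = max 9 (⌈t⌉₊:ℝ) := by rw [hm]; push_cast; rfl
      rw [hcast]
      apply max_le <;> linarith
    have habs : |β*t - β*(m:ℝ)| ≤ 9*β := by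
      rw [abs_sub_comm, abs_of_nonneg (by nlinarith)]
      nlinarith
    have hcmp := compare_lb n r hr_pos hr_sum (β*(m:ℝ)) (β*t) (φ x) (fun j => (v j:ℝ))
    have hexp : Real.exp (-(9*β)) ≤ Real.exp (-|β*t - β*(m:ℝ)|) :=
      Real.exp_le_exp.mpr (by linarith)
    calc min (Real.exp (-(8*β))) (δ * Real.exp (-(9*β)))
        ≤ δ * Real.exp (-(9*β)) := min_le_right _ _
      _ = Real.exp (-(9*β)) * δ := mul_comm _ _
      _ ≤ Real.exp (-|β*t - β*(m:ℝ)|) *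
          euclNorm ((aMat n r (β*(m:ℝ)) * uMat n (φ x)).mulVec (fun j => (v j : ℝ))) :=
          mul_le_mul hexp hδm hδ.le (Real.exp_pos _).le
      _ ≤ _ := hcmp
end

section
/- Let n ∈ ℕ, let r₁ ≥ r₂ ≥ … ≥ rₙ > 0 with Σᵢ rᵢ = 1, let R > 1, β := (ln R)/(1+r₁), let ξ satisfy 0 < ξ < (n+1)/e, and set λ₁ := ⌈ln((n+1)/ξ)/(β·rₙ)⌉ and k₁ := (ξ/(n+1))·e^{−βλ₁}. Let y ∈ ℝⁿ and q ∈ ℕ with q > λ₁, and suppose that for every real t with 0 < t ≤ q, every nonzero vector of the lattice a(βt)·u(y)·ℤ^{n+1} has Euclidean norm at least ξ. Then for every real H with 1 ≤ H < e^{β(q−λ₁)}, there is no nonzero integer vector (a₀, a₁, …, aₙ) ∈ ℤ^{n+1} satisfying |a₀ + Σ_{i=1}^n aᵢyᵢ| ≤ k₁·H⁻¹ and |aᵢ| ≤ H^{rᵢ} for all 1 ≤ i ≤ n. -/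
/- STATEMENT 6: Corollary `dual`: no small nonzero integer solutions to the dual
system, given non-divergence of the lattice orbit. -/

open Set Matrix

lemma uMulVec (n : ℕ) (y : Fin n → ℝ) (w : Fin (n+1) → ℝ) :
    (uMat n y).mulVec w =
    Fin.cases (w 0 + ∑ i, y i * w i.succ) (fun i => w i.succ) := by
  funext j
  induction j using Fin.cases with
  | zero =>
    simp [Matrix.mulVec, dotProduct, uMat, Fin.sum_univ_succ, (Fin.succ_ne_zero _).symm]
  | succ i =>
    simp [Matrix.mulVec, dotProduct, uMat, Fin.succ_ne_zero]

theorem stmt6 (n : ℕ) (hn : 1 ≤ n) (r : Fin n → ℝ)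
    (hr_pos : ∀ i, 0 < r i) (hr_sorted : ∀ i j : Fin n, i ≤ j → r j ≤ r i)
    (hr_sum : ∑ i, r i = 1)
    (R : ℝ) (hR : 1 < R) (β : ℝ) (hβ : β = Real.log R / (1 + r ⟨0, by omega⟩))
    (ξ : ℝ) (hξ_pos : 0 < ξ) (hξ : ξ < ((n : ℝ) + 1) / Real.exp 1)
    (lam1 : ℤ) (hlam1 : lam1 = ⌈Real.log (((n : ℝ) + 1) / ξ) / (β * r ⟨n - 1, by omega⟩)⌉)
    (k₁ : ℝ) (hk₁ : k₁ = ξ / ((n : ℝ) + 1) * Real.exp (-β * lam1))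
    (y : Fin n → ℝ) (q : ℕ) (hq : lam1 < (q : ℤ))
    -- the lattice `a(βt)u(y)ℤ^{n+1}` has no nonzero vector shorter than `ξ`, for `0 < t ≤ q`
    (hlat : ∀ t : ℝ, 0 < t → t ≤ (q : ℝ) → ∀ v : Fin (n + 1) → ℤ, v ≠ 0 →
      ξ ≤ euclNorm ((aMat n r (β * t) * uMat n y).mulVec (fun j => (v j : ℝ)))) :
    ∀ H : ℝ, 1 ≤ H → H < Real.exp (β * ((q : ℝ) - (lam1 : ℝ))) →
      ¬ ∃ a : Fin (n + 1) → ℤ, a ≠ 0 ∧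
        |(a 0 : ℝ) + ∑ i : Fin n, (a i.succ : ℝ) * y i| ≤ k₁ * H⁻¹ ∧
        ∀ i : Fin n, |(a i.succ : ℝ)| ≤ H ^ (r i) := by
  intro H hH1 hH2
  rintro ⟨a, ha0, haL, haI⟩
  have hHpos : (0:ℝ) < H := by linarith
  have hr0 : (0:ℝ) < r ⟨0, by omega⟩ := hr_pos _
  have hβpos : 0 < β := by
    rw [hβ]; exact div_pos (Real.log_pos hR) (by linarith)
  have hrnpos : 0 < r ⟨n-1, by omega⟩ := hr_pos _
  have hn1 : (0:ℝ) < (n:ℝ)+1 := by positivity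
  have he1 : (1:ℝ) < Real.exp 1 := by
    have := Real.add_one_lt_exp (by norm_num : (1:ℝ) ≠ 0); linarith
  have hratio : 1 < ((n:ℝ)+1)/ξ := by
    rw [lt_div_iff₀ hξ_pos]
    have h2 : ξ * Real.exp 1 < ((n:ℝ)+1) := (lt_div_iff₀ (Real.exp_pos 1)).mp hξ
    nlinarith
  have hlogpos : 0 < Real.log (((n:ℝ)+1)/ξ) := Real.log_pos hratio
  have hβrn : 0 < β * r ⟨n-1, by omega⟩ := mul_pos hβpos hrnpos
  have hceil : Real.log (((n:ℝ)+1)/ξ) / (β * r ⟨n-1, by omega⟩) ≤ (lam1:ℝ) := by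
    rw [hlam1]; exact Int.le_ceil _
  have hlam1pos : (0:ℝ) < (lam1:ℝ) := lt_of_lt_of_le (div_pos hlogpos hβrn) hceil
  have hkey : Real.log (((n:ℝ)+1)/ξ) ≤ r ⟨n-1, by omega⟩ * β * (lam1:ℝ) := by
    have := (div_le_iff₀ hβrn).mp hceil; linarith
  set t : ℝ := Real.log H / β + (lam1:ℝ) with ht
  have hlogH : 0 ≤ Real.log H := Real.log_nonneg hH1
  have ht0 : 0 < t := by
    have : 0 ≤ Real.log H / β := div_nonneg hlogH hβpos.le
    rw [ht]; linarith
  have htq : t ≤ (q:ℝ) := by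
    have h1 : Real.log H < β * ((q:ℝ) - lam1) := by
      have := Real.log_lt_log hHpos hH2
      rwa [Real.log_exp] at this
    have h2 : Real.log H / β < (q:ℝ) - lam1 := (div_lt_iff₀ hβpos).mpr (by linarith)
    rw [ht]; linarith
  have hβt : β * t = Real.log H + β * (lam1:ℝ) := by
    rw [ht]; field_simp
  set c : ℝ := ξ / ((n:ℝ)+1) with hc
  have hcpos : 0 < c := by positivity
  have key := hlat t ht0 htq a ha0
  set av : Fin (n+1) → ℝ := fun j => (a j : ℝ) with hav
  set F : Fin (n+1) → ℝ := (aMat n r (β * t) * uMat n y).mulVec av with hF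
  have hF0 : F 0 = Real.exp (β * t) * (av 0 + ∑ i, y i * av i.succ) := by
    rw [hF, ← Matrix.mulVec_mulVec, uMulVec, aMat, Matrix.mulVec_diagonal]
    simp
  have hFs : ∀ i : Fin n, F i.succ = Real.exp (-(r i * (β * t))) * av i.succ := by
    intro i
    rw [hF, ← Matrix.mulVec_mulVec, uMulVec, aMat, Matrix.mulVec_diagonal]
    simp
  -- bound coordinate 0
  have hexpβt : Real.exp (β * t) = H * Real.exp (β * (lam1:ℝ)) := by
    rw [hβt, Real.exp_add, Real.exp_log hHpos]
  have hek : Real.exp (β * (lam1:ℝ)) * k₁ = c := by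
    rw [hk₁, show (-β * (lam1:ℝ)) = -(β * (lam1:ℝ)) by ring, Real.exp_neg]
    field_simp
  have hb0 : |F 0| ≤ c := by
    rw [hF0, abs_mul, abs_of_pos (Real.exp_pos _)]
    have hL : |av 0 + ∑ i, y i * av i.succ| ≤ k₁ * H⁻¹ := by
      have : (av 0 + ∑ i, y i * av i.succ) = ((a 0 : ℝ) + ∑ i : Fin n, (a i.succ : ℝ) * y i) := by
        simp [hav, mul_comm]
      rw [this]; exact haL
    calc Real.exp (β * t) * |av 0 + ∑ i, y i * av i.succ|
        ≤ Real.exp (β * t) * (k₁ * H⁻¹) := by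
          exact mul_le_mul_of_nonneg_left hL (Real.exp_pos _).le
      _ = Real.exp (β * (lam1:ℝ)) * k₁ * (H * H⁻¹) := by rw [hexpβt]; ring
      _ = c := by rw [mul_inv_cancel₀ (ne_of_gt hHpos), hek, mul_one]
  -- bound other coordinates
  have hbi : ∀ i : Fin n, |F i.succ| ≤ c := by
    intro i
    have hib : (i:ℕ) < n := i.isLt
    have hri : r ⟨n-1, by omega⟩ ≤ r i := by
      apply hr_sorted
      rw [Fin.le_def]
      show (i:ℕ) ≤ n - 1
      omega
    have hstep : Real.exp (-(r i * (β * t))) * H ^ (r i)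
        = Real.exp (-(r i * β * (lam1:ℝ))) := by
      rw [Real.rpow_def_of_pos hHpos, ← Real.exp_add, hβt]
      ring_nf
    have hmon : Real.exp (-(r i * β * (lam1:ℝ))) ≤ Real.exp (-(r ⟨n-1, by omega⟩ * β * (lam1:ℝ))) := by
      apply Real.exp_le_exp.mpr
      have : r ⟨n-1, by omega⟩ * β * (lam1:ℝ) ≤ r i * β * (lam1:ℝ) := by
        apply mul_le_mul_of_nonneg_right _ hlam1pos.le
        exact mul_le_mul_of_nonneg_right hri hβpos.le
      linarith
    have hfin : Real.exp (-(r ⟨n-1, by omega⟩ * β * (lam1:ℝ))) ≤ c := by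
      have h1 : ((n:ℝ)+1)/ξ ≤ Real.exp (r ⟨n-1, by omega⟩ * β * (lam1:ℝ)) := by
        calc ((n:ℝ)+1)/ξ = Real.exp (Real.log (((n:ℝ)+1)/ξ)) :=
              (Real.exp_log (by positivity)).symm
          _ ≤ _ := Real.exp_le_exp.mpr hkey
      rw [Real.exp_neg, hc, show ξ / ((n:ℝ)+1) = (((n:ℝ)+1)/ξ)⁻¹ by rw [inv_div]]
      exact inv_anti₀ (by positivity) h1
    rw [hFs i, abs_mul, abs_of_pos (Real.exp_pos _)]
    calc Real.exp (-(r i * (β * t))) * |av i.succ|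
        ≤ Real.exp (-(r i * (β * t))) * H ^ (r i) :=
          mul_le_mul_of_nonneg_left (haI i) (Real.exp_pos _).le
      _ = Real.exp (-(r i * β * (lam1:ℝ))) := hstep
      _ ≤ c := le_trans hmon hfin
  -- sum of squares bound
  have hsum : ∑ j, (F j) ^ 2 ≤ ((n:ℝ)+1) * c ^ 2 := by
    have h0 : (F 0) ^ 2 ≤ c ^ 2 := sq_le_sq' (by linarith [(abs_le.mp hb0).1]) (abs_le.mp hb0).2
    have hi : ∀ i : Fin n, (F i.succ) ^ 2 ≤ c ^ 2 := fun i =>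
      sq_le_sq' (by linarith [(abs_le.mp (hbi i)).1]) (abs_le.mp (hbi i)).2
    calc ∑ j, (F j) ^ 2 = (F 0) ^ 2 + ∑ i : Fin n, (F i.succ) ^ 2 := Fin.sum_univ_succ _
      _ ≤ c ^ 2 + ∑ i : Fin n, c ^ 2 := by
          apply add_le_add h0 (Finset.sum_le_sum fun i _ => hi i)
      _ = c ^ 2 + (n:ℝ) * c ^ 2 := by simp [Finset.sum_const, mul_comm]
      _ = ((n:ℝ)+1) * c ^ 2 := by ring
  have hlt : ((n:ℝ)+1) * c ^ 2 < ξ ^ 2 := by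
    have heq : ((n:ℝ)+1) * c ^ 2 = ξ ^ 2 / ((n:ℝ)+1) := by
      rw [hc]; field_simp
    rw [heq]
    have h1n : (1:ℝ) ≤ (n:ℝ) := by exact_mod_cast hn
    exact div_lt_self (by positivity) (by linarith)
  have hlt2 : ∑ j, (F j) ^ 2 < ξ ^ 2 := lt_of_le_of_lt hsum hlt
  have hfin2 : euclNorm F < ξ := by
    have hnn : 0 ≤ ∑ j, (F j) ^ 2 := Finset.sum_nonneg fun j _ => sq_nonneg _
    have h := Real.sqrt_lt_sqrt hnn hlt2
    rw [Real.sqrt_sq hξ_pos.le] at h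
    exact h
  linarith
end

section
/- With I₀, d₁, θ₁, c, r₁ and the partition I₀^{1,m},…,I₀^{m⋆,m} as in the context, for every m ∈ ℕ, every 1 ≤ j ≤ m⋆, and every p₁ ∈ ℤ: Δ̃^{j,m}(p₁) ⊆ Δ^{j,m}(p₁) ⊆ {x ∈ I₀^{j,m} : |x − (p₁ + θ₁^{j,m})/m| < 2c/m^{1+r₁}}. -/
/- STATEMENT 8: Lemma `interval inside domain`:
`Δ̃^{j,m}(p₁) ⊆ Δ^{j,m}(p₁) ⊆ 4Δ̃^{j,m}(p₁)`. -/

open Set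
set_option maxHeartbeats 2000000

/-- length of the pieces of the partition of `I₀ = [a,b]`:
`ℓ = c|I₀|/(2 d₁ m^{r₁})`. -/
noncomputable def pieceLen (c a b d₁ r₁ : ℝ) (m : ℕ) : ℝ :=
  c * (b - a) / (2 * d₁ * (m : ℝ) ^ r₁)

/-- `m⋆ = ⌈(2d₁/c) m^{r₁}⌉`. -/
noncomputable def mstar (c d₁ r₁ : ℝ) (m : ℕ) : ℕ :=
  ⌈(2 * d₁ / c) * (m : ℝ) ^ r₁⌉₊

/-- the `j`-th piece `I₀^{j,m}` (for `1 ≤ j ≤ m⋆`), the last one truncated at `b`. -/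
noncomputable def pieceI (c a b d₁ r₁ : ℝ) (m j : ℕ) : Set ℝ :=
  Icc (a + ((j : ℝ) - 1) * pieceLen c a b d₁ r₁ m)
    (min (a + (j : ℝ) * pieceLen c a b d₁ r₁ m) b)

/-- the center `x₀^{j,m}` of `I₀^{j,m}`. -/
noncomputable def pieceCenter (c a b d₁ r₁ : ℝ) (m j : ℕ) : ℝ :=
  ((a + ((j : ℝ) - 1) * pieceLen c a b d₁ r₁ m)
    + min (a + (j : ℝ) * pieceLen c a b d₁ r₁ m) b) / 2

theorem stmt8 (a b : ℝ) (hab : a < b) (hlen : b - a ≤ 1)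
    (d₁ : ℝ) (hd₁ : 0 < d₁)
    (θ₁ : ℝ → ℝ) (hθ₁ : ∀ x ∈ Icc a b, ∀ y ∈ Icc a b, |θ₁ x - θ₁ y| ≤ d₁ * |x - y|)
    (r₁ : ℝ) (hr₁ : 0 < r₁) (hr₁' : r₁ ≤ 1)
    (c : ℝ) (hc : 0 < c) (hc' : c ≤ d₁)
    (m : ℕ) (hm : 1 ≤ m) (j : ℕ) (hj : 1 ≤ j) (hj' : j ≤ mstar c d₁ r₁ m)
    (p₁ : ℤ) :
    -- Δ̃ ⊆ Δ
    {x ∈ pieceI c a b d₁ r₁ m j |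
        |x - ((p₁ : ℝ) + θ₁ (pieceCenter c a b d₁ r₁ m j)) / m| < c / (2 * (m : ℝ) ^ (1 + r₁))}
      ⊆ {x ∈ pieceI c a b d₁ r₁ m j |
        |x - ((p₁ : ℝ) + θ₁ x) / m| < c / (m : ℝ) ^ (1 + r₁)}
    ∧ -- Δ ⊆ 4Δ̃
      {x ∈ pieceI c a b d₁ r₁ m j |
        |x - ((p₁ : ℝ) + θ₁ x) / m| < c / (m : ℝ) ^ (1 + r₁)}
      ⊆ {x ∈ pieceI c a b d₁ r₁ m j |
        |x - ((p₁ : ℝ) + θ₁ (pieceCenter c a b d₁ r₁ m j)) / m| < 2 * c / (m : ℝ) ^ (1 + r₁)} := by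
  have hM : (0:ℝ) < (m:ℝ) := by exact_mod_cast hm
  unfold pieceI pieceCenter pieceLen
  set B := (m:ℝ) ^ r₁ with hBdef
  set M1 := (m:ℝ) ^ (1 + r₁) with hM1def
  set ℓ := c * (b - a) / (2 * d₁ * B) with hℓdef
  set lo := a + ((j:ℝ) - 1) * ℓ with hlo
  set hi := min (a + (j:ℝ) * ℓ) b with hhi
  set ctr := (lo + hi) / 2 with hctr
  clear_value B M1 ℓ lo hi ctr
  have hMr : (0:ℝ) < B := by rw [hBdef]; exact Real.rpow_pos_of_pos hM r₁
  have hM1r : M1 = (m:ℝ) * B := by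
    rw [hM1def, hBdef, Real.rpow_add hM, Real.rpow_one]
  have hM1pos : (0:ℝ) < M1 := by rw [hM1r]; positivity
  have hℓpos : 0 < ℓ := by
    rw [hℓdef]
    have : 0 < b - a := by linarith
    positivity
  have hloa : a ≤ lo := by
    have : (1:ℝ) ≤ (j:ℝ) := by exact_mod_cast hj
    nlinarith
  have hhib : hi ≤ b := by rw [hhi]; exact min_le_right _ _
  have hhile : hi ≤ a + (j:ℝ) * ℓ := by rw [hhi]; exact min_le_left _ _
  have key : ∀ x ∈ Icc lo hi, |θ₁ x - θ₁ ctr| / m ≤ c / (4 * M1) := by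
    intro x hx
    obtain ⟨hx1, hx2⟩ := hx
    have hlohi : lo ≤ hi := le_trans hx1 hx2
    have hxab : x ∈ Icc a b := ⟨le_trans hloa hx1, le_trans hx2 hhib⟩
    have hcab : ctr ∈ Icc a b := by
      rw [hctr]
      constructor
      · nlinarith [hlohi, hhib]
      · nlinarith [hlohi, hhib]
    have hdist : |x - ctr| ≤ ℓ / 2 := by
      rw [hctr]
      have : hi - lo ≤ ℓ := by rw [hlo]; nlinarith
      rw [abs_le]
      constructor <;> nlinarith
    have hθ := hθ₁ x hxab ctr hcab
    have h1 : |θ₁ x - θ₁ ctr| ≤ d₁ * (ℓ / 2) := by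
      calc |θ₁ x - θ₁ ctr| ≤ d₁ * |x - ctr| := hθ
        _ ≤ d₁ * (ℓ / 2) := mul_le_mul_of_nonneg_left hdist hd₁.le
    have heq : d₁ * (ℓ / 2) = c * (b - a) / (4 * B) := by
      rw [hℓdef]; field_simp; ring
    have h2 : |θ₁ x - θ₁ ctr| ≤ c / (4 * B) := by
      rw [heq] at h1
      refine le_trans h1 ?_
      gcongr
      nlinarith
    rw [le_div_iff₀ (by positivity)] at h2
    rw [div_le_div_iff₀ hM (by positivity), hM1r]
    nlinarith [h2, hM]
  constructor
  · rintro x ⟨hx, hlt⟩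
    refine ⟨hx, ?_⟩
    have hk := key x hx
    have htri : |x - ((p₁:ℝ) + θ₁ x) / m| ≤
        |x - ((p₁:ℝ) + θ₁ ctr) / m| + |θ₁ x - θ₁ ctr| / m := by
      have heq2 : x - ((p₁:ℝ) + θ₁ x) / m =
          (x - ((p₁:ℝ) + θ₁ ctr) / m) + ((θ₁ ctr - θ₁ x) / m) := by
        field_simp
        ring
      rw [heq2]
      refine le_trans (abs_add_le _ _) ?_
      have heq3 : |(θ₁ ctr - θ₁ x) / m| = |θ₁ x - θ₁ ctr| / m := by
        rw [abs_div, abs_sub_comm, abs_of_pos hM]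
      rw [heq3]
    have h4 : c / (2 * M1) + c / (4 * M1) = (3/4) * (c / M1) := by
      field_simp; ring
    have h5 : 0 < c / M1 := by positivity
    linarith
  · rintro x ⟨hx, hlt⟩
    refine ⟨hx, ?_⟩
    have hk := key x hx
    have htri : |x - ((p₁:ℝ) + θ₁ ctr) / m| ≤
        |x - ((p₁:ℝ) + θ₁ x) / m| + |θ₁ x - θ₁ ctr| / m := by
      have heq2 : x - ((p₁:ℝ) + θ₁ ctr) / m =
          (x - ((p₁:ℝ) + θ₁ x) / m) + ((θ₁ x - θ₁ ctr) / m) := by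
        field_simp
        ring
      rw [heq2]
      refine le_trans (abs_add_le _ _) ?_
      rw [abs_div, abs_of_pos hM]
    have h4 : c / M1 + c / (4 * M1) = (5/8) * (2 * c / M1) := by
      field_simp; ring
    have h5 : 0 < 2 * c / M1 := by positivity
    linarith
end

section
/- With I₀, d₁, θ₁, c, r₁ and the partition I₀^{1,m},…,I₀^{m⋆,m} as in the context, for every m ∈ ℕ with m > 17|I₀|⁻¹d₁ and every p₁ ∈ ℤ, there are at most two indices j ∈ {1,…,m⋆} for which Δ^{j,m}(p₁) ≠ ∅. -/
/- STATEMENT 10: Proposition `key1`: for `m > 17|I₀|⁻¹d₁`, at most two indices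
`j ∈ {1,…,m⋆}` have `Δ^{j,m}(p₁) ≠ ∅`. -/

open Set

set_option maxHeartbeats 1000000 in
theorem stmt10 (a b : ℝ) (hab : a < b) (hlen : b - a ≤ 1)
    (d₁ : ℝ) (hd₁ : 0 < d₁)
    (θ₁ : ℝ → ℝ) (hθ₁ : ∀ x ∈ Icc a b, ∀ y ∈ Icc a b, |θ₁ x - θ₁ y| ≤ d₁ * |x - y|)
    (r₁ : ℝ) (hr₁ : 0 < r₁) (hr₁' : r₁ ≤ 1)
    (c : ℝ) (hc : 0 < c) (hc' : c ≤ d₁)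
    (m : ℕ) (hm : 17 * (b - a)⁻¹ * d₁ < (m : ℝ))
    (p₁ : ℤ) :
    Set.encard {j : ℕ | 1 ≤ j ∧ j ≤ mstar c d₁ r₁ m ∧
        {x ∈ pieceI c a b d₁ r₁ m j |
          |x - ((p₁ : ℝ) + θ₁ x) / m| < c / (m : ℝ) ^ (1 + r₁)}.Nonempty}
      ≤ 2 := by
  set S := {j : ℕ | 1 ≤ j ∧ j ≤ mstar c d₁ r₁ m ∧
      {x ∈ pieceI c a b d₁ r₁ m j |
        |x - ((p₁ : ℝ) + θ₁ x) / m| < c / (m : ℝ) ^ (1 + r₁)}.Nonempty} with hSdef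
  have hba : 0 < b - a := sub_pos.mpr hab
  have hM : (0 : ℝ) < m := lt_trans (by positivity) hm
  have hR : (0 : ℝ) < (m : ℝ) ^ r₁ := Real.rpow_pos_of_pos hM r₁
  have hℓpos : 0 < pieceLen c a b d₁ r₁ m := by
    unfold pieceLen; positivity
  have h17 : 17 * d₁ < (m : ℝ) * (b - a) := by
    have h := mul_lt_mul_of_pos_right hm hba
    have hinv : (b - a)⁻¹ * (b - a) = 1 := inv_mul_cancel₀ hba.ne'
    nlinarith [h, hinv]
  have hmd : d₁ < (m : ℝ) := by nlinarith [mul_le_of_le_one_right hM.le hlen]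
  have hpow : (m : ℝ) ^ (1 + r₁) = (m : ℝ) * (m : ℝ) ^ r₁ := by
    rw [Real.rpow_add hM, Real.rpow_one]
  set ℓ := pieceLen c a b d₁ r₁ m with hℓ
  -- main combinatorial step
  have key : ∀ j ∈ S, ∀ k ∈ S, j + 2 ≤ k → False := by
    intro j hj k hk hjk
    obtain ⟨hj1, -, x, hxI, hxΔ⟩ := hj
    obtain ⟨hk1, -, y, hyI, hyΔ⟩ := hk
    simp only [pieceI, Set.mem_Icc] at hxI hyI
    have hx_le : x ≤ a + (j : ℝ) * ℓ := le_trans hxI.2 (min_le_left _ _)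
    have hxb : x ≤ b := le_trans hxI.2 (min_le_right _ _)
    have hyb : y ≤ b := le_trans hyI.2 (min_le_right _ _)
    have hj1' : (1 : ℝ) ≤ (j : ℝ) := by exact_mod_cast hj1
    have hk1' : (1 : ℝ) ≤ (k : ℝ) := by exact_mod_cast hk1
    have hxa : a ≤ x := by nlinarith [hxI.1]
    have hya : a ≤ y := by nlinarith [hyI.1]
    have hjk' : (j : ℝ) + 2 ≤ (k : ℝ) := by exact_mod_cast hjk
    have hD : ℓ ≤ y - x := by nlinarith [hyI.1]
    -- multiply the Δ-inequalities by m
    have habsx : |x * (m : ℝ) - ((p₁ : ℝ) + θ₁ x)| < c / (m : ℝ) ^ r₁ := by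
      have h1 : |x * (m : ℝ) - ((p₁ : ℝ) + θ₁ x)|
          = |x - ((p₁ : ℝ) + θ₁ x) / m| * (m : ℝ) := by
        rw [show ∀ u : ℝ, |u| * (m : ℝ) = |u| * |(m : ℝ)| from fun u => by
            rw [abs_of_pos hM],
          ← abs_mul, sub_mul, div_mul_cancel₀ _ (ne_of_gt hM)]
      rw [h1]
      have := mul_lt_mul_of_pos_right hxΔ hM
      calc |x - ((p₁ : ℝ) + θ₁ x) / m| * (m : ℝ)
          < c / (m : ℝ) ^ (1 + r₁) * m := this
        _ = c / (m : ℝ) ^ r₁ := by rw [hpow, mul_comm ((m:ℝ)) ((m:ℝ) ^ r₁), ← div_div, div_mul_cancel₀ _ (ne_of_gt hM)]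
    have habsy : |y * (m : ℝ) - ((p₁ : ℝ) + θ₁ y)| < c / (m : ℝ) ^ r₁ := by
      have h1 : |y * (m : ℝ) - ((p₁ : ℝ) + θ₁ y)|
          = |y - ((p₁ : ℝ) + θ₁ y) / m| * (m : ℝ) := by
        rw [show ∀ u : ℝ, |u| * (m : ℝ) = |u| * |(m : ℝ)| from fun u => by
            rw [abs_of_pos hM],
          ← abs_mul, sub_mul, div_mul_cancel₀ _ (ne_of_gt hM)]
      rw [h1]
      have := mul_lt_mul_of_pos_right hyΔ hM
      calc |y - ((p₁ : ℝ) + θ₁ y) / m| * (m : ℝ)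
          < c / (m : ℝ) ^ (1 + r₁) * m := this
        _ = c / (m : ℝ) ^ r₁ := by rw [hpow, mul_comm ((m:ℝ)) ((m:ℝ) ^ r₁), ← div_div, div_mul_cancel₀ _ (ne_of_gt hM)]
    -- Lipschitz bound
    have hLip : |θ₁ y - θ₁ x| ≤ d₁ * (y - x) := by
      have := hθ₁ y ⟨hya, hyb⟩ x ⟨hxa, hxb⟩
      rwa [abs_of_nonneg (by linarith [hD, hℓpos] : (0:ℝ) ≤ y - x)] at this
    -- combine
    have htri : (y - x) * (m : ℝ) - (θ₁ y - θ₁ x) < 2 * c / (m : ℝ) ^ r₁ := by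
      have h3 : |(y * (m : ℝ) - ((p₁ : ℝ) + θ₁ y)) - (x * (m : ℝ) - ((p₁ : ℝ) + θ₁ x))|
          ≤ |y * (m : ℝ) - ((p₁ : ℝ) + θ₁ y)| + |x * (m : ℝ) - ((p₁ : ℝ) + θ₁ x)| :=
        abs_sub (y * (m : ℝ) - ((p₁ : ℝ) + θ₁ y)) (x * (m : ℝ) - ((p₁ : ℝ) + θ₁ x))
      have h4 := le_abs_self ((y * (m : ℝ) - ((p₁ : ℝ) + θ₁ y)) - (x * (m : ℝ) - ((p₁ : ℝ) + θ₁ x)))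
      have h5 := add_lt_add habsy habsx
      have h6 : (y - x) * (m : ℝ) - (θ₁ y - θ₁ x)
          = (y * (m : ℝ) - ((p₁ : ℝ) + θ₁ y)) - (x * (m : ℝ) - ((p₁ : ℝ) + θ₁ x)) := by ring
      have h7 : c / (m : ℝ) ^ r₁ + c / (m : ℝ) ^ r₁ = 2 * c / (m : ℝ) ^ r₁ := by ring
      linarith [h3, h4, h5]
    have hθle : θ₁ y - θ₁ x ≤ d₁ * (y - x) := le_trans (le_abs_self _) hLip
    have hfin : (y - x) * ((m : ℝ) - d₁) < 2 * c / (m : ℝ) ^ r₁ := by nlinarith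
    have hfin2 : (y - x) * ((m : ℝ) - d₁) * (m : ℝ) ^ r₁ < 2 * c :=
      (lt_div_iff₀ hR).mp hfin
    have hℓR : ℓ * (m : ℝ) ^ r₁ = c * (b - a) / (2 * d₁) := by
      rw [hℓ]; unfold pieceLen; field_simp
    have hlow : c * (b - a) / (2 * d₁) * ((m : ℝ) - d₁) ≤ (y - x) * ((m : ℝ) - d₁) * (m : ℝ) ^ r₁ := by
      rw [← hℓR]
      nlinarith [mul_le_mul_of_nonneg_right hD hR.le]
    have hcon : c * (b - a) / (2 * d₁) * ((m : ℝ) - d₁) < 2 * c := lt_of_le_of_lt hlow hfin2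
    have hdiv : c * (b - a) / (2 * d₁) * ((m : ℝ) - d₁) * (2 * d₁) = c * (b - a) * ((m : ℝ) - d₁) := by
      field_simp
    nlinarith [mul_lt_mul_of_pos_right hcon (by positivity : (0:ℝ) < 2 * d₁),
      mul_le_mul_of_nonneg_left hlen hd₁.le]
  -- conclude
  rcases S.eq_empty_or_nonempty with hE | hne
  · rw [hE]; simp
  · have hsub : S ⊆ {sInf S, sInf S + 1} := by
      intro k hk
      have h1 := Nat.sInf_le hk
      have h2 : k ≤ sInf S + 1 := by
        by_contra h
        exact key _ (Nat.sInf_mem hne) _ hk (by omega)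
      simp only [Set.mem_insert_iff, Set.mem_singleton_iff]
      omega
    calc S.encard ≤ ({sInf S, sInf S + 1} : Set ℕ).encard := Set.encard_le_encard hsub
      _ ≤ 2 := by
        calc ({sInf S, sInf S + 1} : Set ℕ).encard
            ≤ ({sInf S + 1} : Set ℕ).encard + 1 := Set.encard_insert_le _ _
          _ = 2 := by rw [Set.encard_singleton]; rfl
end

section
/- With the notation of the context, let q ∈ ℕ and let I ⊆ I₀ be a closed interval with |I| = |I₀|·R^{−(q−1)} such that for every x ∈ I and every real Q with 1 ≤ Q < e^{β(q−1−λ₁)}, there is no nonzero (m, p₁,…,pₙ) ∈ ℤ^{n+1} with |m| ≤ Q and |m·φᵢ(x) − pᵢ| < (k₁/n)·Q^{−rᵢ} for all 1 ≤ i ≤ n. Then there is at most one v = p/m ∈ V_q such that for some j ∈ {1,…,m⋆}, v ∈ V^{j,m} and Δ^{j,m}(v) ∩ I ≠ ∅. -/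
open Filter Set

/-- the dangerous domain `Δ^{j,m}(v)` (it only depends on `p₁ = p₀` here). -/
noncomputable def deltaSet (θ₁ : ℝ → ℝ) (c a b d₁ r₁ : ℝ) (m j : ℕ) (p₀ : ℤ) : Set ℝ :=
  {x ∈ pieceI c a b d₁ r₁ m j | |x - ((p₀ : ℝ) + θ₁ x) / m| < c / (m : ℝ) ^ (1 + r₁)}

/-- `v = p/m ∈ V^{j,m}` (the paper's dimension `n ≥ 2` is `n + 2` here). -/
noncomputable def memV (n : ℕ) (bigI : Set ℝ) (φ : ℝ → Fin (n + 2) → ℝ)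
    (θ : Fin (n + 2) → ℝ → ℝ) (d r : Fin (n + 2) → ℝ) (f₀ c a b : ℝ)
    (m j : ℕ) (p : Fin (n + 2) → ℤ) : Prop :=
  ((p 0 : ℝ) + θ 0 (pieceCenter c a b (d 0) (r 0) m j)) / m ∈ bigI ∧
  ∀ i : Fin (n + 2), i ≠ 0 →
    |φ (((p 0 : ℝ) + θ 0 (pieceCenter c a b (d 0) (r 0) m j)) / m) i
      - ((p i : ℝ) + θ i (((p 0 : ℝ) + θ 0 (pieceCenter c a b (d 0) (r 0) m j)) / m)) / m|
    < (f₀ + d i) * c / (m : ℝ) ^ (1 + r i)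

/-- `v = p/m ∈ V`. -/
noncomputable def memBigV (n : ℕ) (bigI : Set ℝ) (φ : ℝ → Fin (n + 2) → ℝ)
    (θ : Fin (n + 2) → ℝ → ℝ) (d r : Fin (n + 2) → ℝ) (f₀ c a b : ℝ)
    (m : ℕ) (p : Fin (n + 2) → ℤ) : Prop :=
  17 * (b - a)⁻¹ * d 0 < (m : ℝ) ∧
  ∃ j : ℕ, 1 ≤ j ∧ j ≤ mstar c (d 0) (r 0) m ∧ memV n bigI φ θ d r f₀ c a b m j p

/-- `v = p/m ∈ V_q`. -/
noncomputable def memVq (n : ℕ) (bigI : Set ℝ) (φ : ℝ → Fin (n + 2) → ℝ)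
    (θ : Fin (n + 2) → ℝ → ℝ) (d r : Fin (n + 2) → ℝ) (f₀ c a b R : ℝ)
    (q m : ℕ) (p : Fin (n + 2) → ℤ) : Prop :=
  memBigV n bigI φ θ d r f₀ c a b m p ∧
  2 * c * (b - a)⁻¹ * R ^ (q + 1) ≤ (m : ℝ) ^ (1 + r 0) ∧
  (m : ℝ) ^ (1 + r 0) < 2 * c * (b - a)⁻¹ * R ^ (q + 2)

/- STATEMENT 11: Proposition `key0`: an interval `I ∈ 𝒥_{q-1}` meets the
dangerous domain of at most one `v = p/m ∈ V_q`.
The paper's dimension `n ≥ 2` is written as `n + 2` below. -/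

private lemma abs5 (a b c d e : ℝ) : |a - b + c - d + e| ≤ |a| + |b| + |c| + |d| + |e| := by
  have h1 : |a - b + c - d + e| ≤ |a - b + c - d| + |e| := abs_add_le _ _
  have h2 : |a - b + c - d| ≤ |a - b + c| + |d| := by
    rw [sub_eq_add_neg (a - b + c) d]
    exact (abs_add_le _ _).trans (by rw [abs_neg])
  have h3 : |a - b + c| ≤ |a - b| + |c| := abs_add_le _ _
  have h4 : |a - b| ≤ |a| + |b| := by
    rw [sub_eq_add_neg]
    exact (abs_add_le _ _).trans (by rw [abs_neg])
  linarith

private lemma abs4 (a b c d : ℝ) : |a - b - c + d| ≤ |a| + |b| + |c| + |d| := by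
  have h1 : |a - b - c + d| ≤ |a - b - c| + |d| := abs_add_le _ _
  have h2 : |a - b - c| ≤ |a - b| + |c| := by
    rw [sub_eq_add_neg (a - b) c]
    exact (abs_add_le _ _).trans (by rw [abs_neg])
  have h4 : |a - b| ≤ |a| + |b| := by
    rw [sub_eq_add_neg]
    exact (abs_add_le _ _).trans (by rw [abs_neg])
  linarith

private lemma point_facts {θ0 : ℝ → ℝ} {bigI : Set ℝ} {c a b d0 r0 : ℝ}
    (hc : 0 < c) (hab : a < b) (hlen : b - a ≤ 1/3) (hd0 : 0 < d0) (hr0 : 0 < r0)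
    (hsub : Icc a b ⊆ bigI)
    (hlip : ∀ x ∈ bigI, ∀ y ∈ bigI, |θ0 x - θ0 y| ≤ d0 * |x - y|)
    {m j : ℕ} (hm : 1 ≤ (m:ℝ)) (hj : 1 ≤ j) {p0 : ℤ} {x : ℝ}
    (hx : x ∈ deltaSet θ0 c a b d0 r0 m j p0) :
    x ∈ Icc a b ∧ pieceCenter c a b d0 r0 m j ∈ Icc a b ∧
      |x - ((p0:ℝ) + θ0 (pieceCenter c a b d0 r0 m j)) / m| ≤ 7/6 * c / (m:ℝ)^(1+r0) ∧
      |(m:ℝ) * x - (p0:ℝ) - θ0 x| < c / (m:ℝ)^r0 := by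
  obtain ⟨hxp, hxc⟩ := hx
  have hba : 0 < b - a := sub_pos.mpr hab
  have hm0 : (0:ℝ) < m := by linarith
  have hmne : (m:ℝ) ≠ 0 := ne_of_gt hm0
  have hmr : 0 < (m:ℝ)^r0 := Real.rpow_pos_of_pos hm0 _
  have hm1r : 0 < (m:ℝ)^(1+r0) := Real.rpow_pos_of_pos hm0 _
  have hsplit : (m:ℝ)^(1+r0) = m * (m:ℝ)^r0 := by
    rw [Real.rpow_add hm0, Real.rpow_one]
  set ℓ := pieceLen c a b d0 r0 m with hℓ
  have hℓpos : 0 < ℓ := by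
    rw [hℓ]; unfold pieceLen; positivity
  set L := a + ((j:ℝ) - 1) * ℓ with hL
  set U := min (a + (j:ℝ) * ℓ) b with hU
  have hxL : L ≤ x := hxp.1
  have hxU : x ≤ U := hxp.2
  have hj1 : (1:ℝ) ≤ (j:ℝ) := by exact_mod_cast hj
  have hLa : a ≤ L := by
    rw [hL]; nlinarith
  have hUb : U ≤ b := min_le_right _ _
  have hxab : x ∈ Icc a b := ⟨le_trans hLa hxL, le_trans hxU hUb⟩
  have hLU : L ≤ U := le_trans hxL hxU
  have hUL : U - L ≤ ℓ := by
    have h : U ≤ a + (j:ℝ) * ℓ := by rw [hU]; exact min_le_left _ _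
    rw [hL]; nlinarith
  have hcenter : pieceCenter c a b d0 r0 m j = (L + U)/2 := rfl
  set x₀ := (L + U)/2 with hx₀
  have hx₀ab : x₀ ∈ Icc a b := ⟨by rw [hx₀]; linarith, by rw [hx₀]; linarith⟩
  have hxx₀ : |x - x₀| ≤ ℓ := abs_le.mpr ⟨by rw [hx₀]; linarith, by rw [hx₀]; linarith⟩
  have hθ : |θ0 x - θ0 x₀| ≤ d0 * ℓ :=
    le_trans (hlip x (hsub hxab) x₀ (hsub hx₀ab)) (mul_le_mul_of_nonneg_left hxx₀ hd0.le)
  refine ⟨hxab, by rw [hcenter]; exact hx₀ab, ?_, ?_⟩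
  · rw [hcenter]
    have key : x - ((p0:ℝ) + θ0 x₀)/m = (x - ((p0:ℝ) + θ0 x)/m) + (θ0 x - θ0 x₀)/m := by
      field_simp; ring
    have h1 : |x - ((p0:ℝ) + θ0 x₀)/m| ≤ |x - ((p0:ℝ) + θ0 x)/m| + |(θ0 x - θ0 x₀)/m| := by
      rw [key]; exact abs_add_le _ _
    have h2 : |(θ0 x - θ0 x₀)/m| ≤ d0 * ℓ / m := by
      rw [abs_div, abs_of_nonneg hm0.le]
      exact (div_le_div_iff_of_pos_right hm0).mpr hθ
    have h3 : d0 * ℓ / m = c*(b-a)/(2*(m:ℝ)^(1+r0)) := by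
      rw [hℓ]; unfold pieceLen; rw [hsplit]; field_simp
    have h4 : c*(b-a)/(2*(m:ℝ)^(1+r0)) ≤ 1/6*c/(m:ℝ)^(1+r0) := by
      rw [div_le_div_iff₀ (by positivity) hm1r]
      have hcb : c*(b-a) ≤ 1/3*c := by
        have := mul_le_mul_of_nonneg_left hlen hc.le; linarith
      have := mul_le_mul_of_nonneg_right hcb hm1r.le
      linarith
    have h5 : |x - ((p0:ℝ) + θ0 x)/m| ≤ c/(m:ℝ)^(1+r0) := hxc.le
    rw [h3] at h2
    refine le_trans h1 ?_
    exact le_trans (add_le_add h5 (h2.trans h4)) (le_of_eq (by ring))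
  · have key4 : (m:ℝ)*x - (p0:ℝ) - θ0 x = m * (x - ((p0:ℝ) + θ0 x)/m) := by
      field_simp; ring
    rw [key4, abs_mul, abs_of_nonneg hm0.le]
    calc (m:ℝ) * |x - ((p0:ℝ) + θ0 x)/m| < m * (c/(m:ℝ)^(1+r0)) :=
          mul_lt_mul_of_pos_left hxc hm0
      _ = c/(m:ℝ)^r0 := by rw [hsplit]; field_simp


private lemma numlem (c k x y z w K : ℝ) (hc : 0 < c) (hk : 0 < k) (hx : 1 ≤ x)
    (hy : 0 < y) (hz : 0 < z) (hw : 1 ≤ w)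
    (hkey : c * (200*y*x*(1+z)^2*w) = K * z) (hK : 0 < K) (hKk : K ≤ k) :
    11*c*w*x < k/y ∧ 4*c*w*(1+z) < k/y := by
  have hz2 : (0:ℝ) < (1+z)^2 := by positivity
  have hz1 : (0:ℝ) < 1+z := by linarith
  have h1 : c * (200*y*x*(1+z)^2*w) ≤ k * z := by
    rw [hkey]; exact mul_le_mul_of_nonneg_right hKk hz.le
  have hw0 : (0:ℝ) < w := by linarith
  have hx0 : (0:ℝ) < x := by linarith
  constructor
  · rw [lt_div_iff₀ hy]
    have h2 : k * z ≤ k * (1+z)^2 := by nlinarith [mul_nonneg hk.le hz.le, mul_nonneg hk.le (sq_nonneg z), hk.le]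
    have h3 : (200*c*y*x*w) * (1+z)^2 ≤ k * (1+z)^2 := by nlinarith [h1, h2]
    have h4 : 200*c*y*x*w ≤ k := le_of_mul_le_mul_right h3 hz2
    have hQ : (0:ℝ) < c*y*x*w := by positivity
    nlinarith [h4, hQ]
  · rw [lt_div_iff₀ hy]
    have h2 : k * z ≤ k * (1+z) := by nlinarith [hk.le]
    have h3 : (200*c*y*x*w*(1+z)) * (1+z) ≤ k * (1+z) := by nlinarith [h1, h2]
    have h4 : 200*c*y*x*w*(1+z) ≤ k := le_of_mul_le_mul_right h3 hz1
    have hP : (0:ℝ) < c*y*w*(1+z) := by positivity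
    have h5 : (c*y*w*(1+z))*1 ≤ (c*y*w*(1+z))*x := mul_le_mul_of_nonneg_left hx hP.le
    nlinarith [h4, h5, hP]


set_option maxHeartbeats 1600000 in
theorem stmt11 (n : ℕ) (r : Fin (n + 2) → ℝ)
    (hr_pos : ∀ i, 0 < r i) (hr_sorted : ∀ i j : Fin (n + 2), i ≤ j → r j ≤ r i)
    (hr_sum : ∑ i, r i = 1)
    (a b : ℝ) (hab : a < b) (hlen : 3 * (b - a) ≤ 1)
    (R : ℝ) (hR : max 1 (b - a)⁻¹ < R)
    (β : ℝ) (hβ : β = Real.log R / (1 + r 0))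
    (ξ : ℝ) (hξ_pos : 0 < ξ) (hξ : ξ < ((n : ℝ) + 3) / Real.exp 1)
    (lam1 : ℤ)
    (hlam1 : lam1 = ⌈Real.log (((n : ℝ) + 3) / ξ) / (β * r (Fin.last (n + 1)))⌉)
    (k₁ : ℝ) (hk₁ : k₁ = ξ / ((n : ℝ) + 3) * Real.exp (-β * lam1))
    (bigI : Set ℝ)
    (hbigI : bigI = Icc ((a + b) / 2 - (3 : ℝ) ^ (n + 3) * (b - a) / 2)
      ((a + b) / 2 + (3 : ℝ) ^ (n + 3) * (b - a) / 2))
    (φ φd : ℝ → Fin (n + 2) → ℝ)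
    (hφ_diff : ∀ (i : Fin (n + 2)), ∀ x ∈ bigI,
      HasDerivWithinAt (fun t => φ t i) (φd x i) bigI x)
    (hφd_cont : ∀ i : Fin (n + 2), ContinuousOn (fun x => φd x i) bigI)
    (hφ_first : ∀ x ∈ bigI, φ x 0 = x)
    (f₀ : ℝ) (hf₀ : f₀ = 1 + sSup {y | ∃ x ∈ bigI, ∃ i : Fin (n + 2), y = |φd x i|})
    (θ : Fin (n + 2) → ℝ → ℝ) (d : Fin (n + 2) → ℝ) (hd : ∀ i, 0 < d i)
    (hθ_lip : ∀ i, ∀ x ∈ bigI, ∀ y ∈ bigI, |θ i x - θ i y| ≤ d i * |x - y|)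
    (dmax2 : ℝ) (hdmax2 : dmax2 = sSup {y | ∃ i : Fin (n + 2), i ≠ 0 ∧ y = d i})
    (c : ℝ)
    (hc : c = k₁ ^ (1 + r 0) * d 0
      / (200 * ((n : ℝ) + 2) * (f₀ + dmax2) * (1 + d 0) ^ 2 * R ^ 4))
    (q : ℕ) (lo hi : ℝ) (hI_sub : Icc lo hi ⊆ Icc a b)
    (hI_len : hi - lo = (b - a) * R ^ (1 - (q : ℤ)))
    -- no small nonzero solutions of the simultaneous system on `I`
    (hno_sol : ∀ x ∈ Icc lo hi, ∀ Q : ℝ, 1 ≤ Q →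
      Q < Real.exp (β * ((q : ℝ) - 1 - (lam1 : ℝ))) →
      ¬ ∃ v : Fin (n + 3) → ℤ, v ≠ 0 ∧ |(v 0 : ℝ)| ≤ Q ∧
        ∀ i : Fin (n + 2),
          |(v 0 : ℝ) * φ x i - (v i.succ : ℝ)| < (k₁ / ((n : ℝ) + 2)) * Q ^ (-(r i))) :
    ∀ (m₁ m₂ : ℕ) (p₁ p₂ : Fin (n + 2) → ℤ),
      (memVq n bigI φ θ d r f₀ c a b R q m₁ p₁ ∧
        ∃ j : ℕ, 1 ≤ j ∧ j ≤ mstar c (d 0) (r 0) m₁ ∧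
          memV n bigI φ θ d r f₀ c a b m₁ j p₁ ∧
          (deltaSet (θ 0) c a b (d 0) (r 0) m₁ j (p₁ 0) ∩ Icc lo hi).Nonempty) →
      (memVq n bigI φ θ d r f₀ c a b R q m₂ p₂ ∧
        ∃ j : ℕ, 1 ≤ j ∧ j ≤ mstar c (d 0) (r 0) m₂ ∧
          memV n bigI φ θ d r f₀ c a b m₂ j p₂ ∧
          (deltaSet (θ 0) c a b (d 0) (r 0) m₂ j (p₂ 0) ∩ Icc lo hi).Nonempty) →
      ∀ i : Fin (n + 2), (p₁ i : ℝ) / m₁ = (p₂ i : ℝ) / m₂ := by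
  intro m₁ m₂ p₁ p₂ h1 h2
  obtain ⟨⟨⟨hmbig₁, -⟩, hlow₁, hup₁⟩, j₁, hj₁, -, hV₁, x₁, hx₁Δ, hx₁I⟩ := h1
  obtain ⟨⟨⟨hmbig₂, -⟩, hlow₂, hup₂⟩, j₂, hj₂, -, hV₂, x₂, hx₂Δ, hx₂I⟩ := h2
  -- ==== basic positivity facts ====
  have hba : 0 < b - a := sub_pos.mpr hab
  have hR1 : 1 < R := lt_of_le_of_lt (le_max_left _ _) hR
  have hR0 : 0 < R := by linarith only [hR1]
  have hRinv : (b - a)⁻¹ < R := lt_of_le_of_lt (le_max_right _ _) hR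
  have hba3 : b - a ≤ 1/3 := by linarith only [hlen]
  have hr0pos : 0 < r 0 := hr_pos 0
  have hrle : ∀ i, r i ≤ r 0 := fun i => hr_sorted 0 i (Fin.zero_le i)
  have hr01 : r 0 ≤ 1 := by
    have h := Finset.single_le_sum (f := r) (fun i _ => (hr_pos i).le) (Finset.mem_univ 0)
    rw [hr_sum] at h; exact h
  have hr1 : ∀ i, r i ≤ 1 := fun i => (hrle i).trans hr01
  have hlogR : 0 < Real.log R := Real.log_pos hR1
  have hβpos : 0 < β := by rw [hβ]; exact div_pos hlogR (by linarith only [hr0pos])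
  have hβr : β * (1 + r 0) = Real.log R := by
    rw [hβ]; field_simp
  -- lam1 ≥ 0
  have he1 : (1:ℝ) < Real.exp 1 := by
    have := Real.add_one_le_exp 1; linarith only [this]
  have hn3ξ : Real.exp 1 < ((n:ℝ)+3)/ξ := by
    rw [lt_div_iff₀ hξ_pos]
    have h := (lt_div_iff₀ (Real.exp_pos 1)).mp hξ
    nlinarith only [h, Real.exp_pos 1, hξ_pos]
  have hlam1nonneg : (0:ℝ) ≤ (lam1:ℝ) := by
    have hlog : 0 < Real.log (((n:ℝ)+3)/ξ) := Real.log_pos (lt_trans he1 hn3ξ)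
    have hden : 0 < β * r (Fin.last (n+1)) := mul_pos hβpos (hr_pos _)
    have hpos : 0 < Real.log (((n:ℝ)+3)/ξ) / (β * r (Fin.last (n+1))) := div_pos hlog hden
    rw [hlam1]
    exact_mod_cast Int.ceil_nonneg hpos.le
  have hk₁pos : 0 < k₁ := by rw [hk₁]; positivity
  have hξn3 : ξ / ((n:ℝ)+3) ≤ 1 := by
    rw [div_le_one (by positivity)]
    have hds : ((n:ℝ)+3)/Real.exp 1 ≤ (n:ℝ)+3 := div_le_self (by positivity) he1.le
    linarith only [hds, hξ]
  have hexplam : Real.exp (-β * lam1) ≤ 1 := by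
    rw [Real.exp_le_one_iff]
    have := mul_nonneg hβpos.le hlam1nonneg
    linarith only [this]
  have hk₁le1 : k₁ ≤ 1 := by
    rw [hk₁]; exact mul_le_one₀ hξn3 (Real.exp_pos _).le hexplam
  -- ==== bigI facts ====
  have h3n : (1:ℝ) ≤ 3^(n+3) := one_le_pow₀ (by norm_num)
  have hsubI : Icc a b ⊆ bigI := by
    rw [hbigI]
    have hmul : 1*(b-a) ≤ 3^(n+3)*(b-a) := mul_le_mul_of_nonneg_right h3n hba.le
    apply Icc_subset_Icc <;> linarith only [hmul, hba]
  have hbigIc : IsCompact bigI := by rw [hbigI]; exact isCompact_Icc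
  have hbigIconv : Convex ℝ bigI := by rw [hbigI]; exact convex_Icc _ _
  have haI : a ∈ bigI := hsubI ⟨le_refl a, hab.le⟩
  -- ==== f₀ facts ====
  have hSbdd : BddAbove {y | ∃ x ∈ bigI, ∃ i : Fin (n + 2), y = |φd x i|} := by
    have h := fun i : Fin (n+2) => hbigIc.exists_bound_of_continuousOn (hφd_cont i)
    choose C hC using h
    refine ⟨Finset.univ.sup' Finset.univ_nonempty C, ?_⟩
    rintro y ⟨x, hx, i, rfl⟩
    exact le_trans (by simpa [Real.norm_eq_abs] using hC i x hx)
      (Finset.le_sup' C (Finset.mem_univ i))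
  have hφd_le : ∀ x ∈ bigI, ∀ i : Fin (n+2), |φd x i| ≤ f₀ := by
    intro x hx i
    have h1 : |φd x i| ≤ sSup {y | ∃ x ∈ bigI, ∃ i : Fin (n + 2), y = |φd x i|} :=
      le_csSup hSbdd ⟨x, hx, i, rfl⟩
    have h2 : (0:ℝ) ≤ |φd a 0| := abs_nonneg _
    have h3 : |φd a 0| ≤ sSup {y | ∃ x ∈ bigI, ∃ i : Fin (n + 2), y = |φd x i|} :=
      le_csSup hSbdd ⟨a, haI, 0, rfl⟩
    rw [hf₀]; linarith only [h1, h2, h3]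
  have hf₀1 : 1 ≤ f₀ := by
    have h2 : (0:ℝ) ≤ |φd a 0| := abs_nonneg _
    have h3 : |φd a 0| ≤ sSup {y | ∃ x ∈ bigI, ∃ i : Fin (n + 2), y = |φd x i|} :=
      le_csSup hSbdd ⟨a, haI, 0, rfl⟩
    rw [hf₀]; linarith only [h2, h3]
  have hφ_lip : ∀ (i : Fin (n+2)), ∀ u ∈ bigI, ∀ v ∈ bigI, |φ u i - φ v i| ≤ f₀ * |u - v| := by
    intro i u hu v hv
    have h := hbigIconv.norm_image_sub_le_of_norm_hasDerivWithin_le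
      (fun x hx => hφ_diff i x hx)
      (fun x hx => by simpa [Real.norm_eq_abs] using hφd_le x hx i) hv hu
    simpa [Real.norm_eq_abs] using h
  -- ==== dmax2 facts ====
  have hTbdd : BddAbove {y | ∃ i : Fin (n + 2), i ≠ 0 ∧ y = d i} := by
    apply Set.Finite.bddAbove
    apply Set.Finite.subset (Set.finite_range d)
    rintro y ⟨i, -, rfl⟩; exact ⟨i, rfl⟩
  have hdmax_ge : ∀ i : Fin (n+2), i ≠ 0 → d i ≤ dmax2 := by
    intro i hi; rw [hdmax2]; exact le_csSup hTbdd ⟨i, hi, rfl⟩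
  have hdmax_pos : 0 < dmax2 := lt_of_lt_of_le (hd 1) (hdmax_ge 1 one_ne_zero)
  have hfd1 : 1 ≤ f₀ + dmax2 := by linarith only [hf₀1, hdmax_pos]
  -- ==== c facts ====
  have hd0 : 0 < d 0 := hd 0
  have hcpos : 0 < c := by
    rw [hc]
    have : 0 < k₁ ^ (1 + r 0) := Real.rpow_pos_of_pos hk₁pos _
    positivity
  have hckey : c * (200*((n:ℝ)+2)*(f₀+dmax2)*(1+d 0)^2*R^4) = k₁ ^ (1 + r 0) * d 0 := by
    rw [hc]; field_simp
  have hk₁r : k₁ ^ (1 + r 0) ≤ k₁ := by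
    calc k₁ ^ (1 + r 0) ≤ k₁ ^ (1:ℝ) :=
          Real.rpow_le_rpow_of_exponent_ge hk₁pos hk₁le1 (by linarith only [hr0pos])
      _ = k₁ := Real.rpow_one _
  have hn2 : (0:ℝ) < (n:ℝ) + 2 := by positivity
  -- the two numerical inequalities
  have hnums := numlem c k₁ (f₀+dmax2) ((n:ℝ)+2) (d 0) (R^4) (k₁ ^ (1+r 0)) hcpos
    hk₁pos hfd1 (by linarith only [hn2]) hd0 (one_le_pow₀ hR1.le) hckey
    (Real.rpow_pos_of_pos hk₁pos _) hk₁r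
  have hnum : 11*c*(R^4)*(f₀+dmax2) < k₁/((n:ℝ)+2) := hnums.1
  have hnum0 : 4*c*(R^4)*(1+d 0) < k₁/((n:ℝ)+2) := hnums.2
  -- ==== m bounds ====
  have hm₁0 : (0:ℝ) < (m₁:ℕ) := by
    have h17 : (0:ℝ) < 17 * (b-a)⁻¹ * d 0 :=
      mul_pos (mul_pos (by norm_num) (inv_pos.mpr hba)) hd0
    linarith only [h17, hmbig₁]
  have hm₂0 : (0:ℝ) < (m₂:ℕ) := by
    have h17 : (0:ℝ) < 17 * (b-a)⁻¹ * d 0 :=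
      mul_pos (mul_pos (by norm_num) (inv_pos.mpr hba)) hd0
    linarith only [h17, hmbig₂]
  have hm₁1 : (1:ℝ) ≤ (m₁:ℕ) := by
    have := Nat.cast_pos (α := ℝ) |>.mp hm₁0
    exact_mod_cast this
  have hm₂1 : (1:ℝ) ≤ (m₂:ℕ) := by
    have := Nat.cast_pos (α := ℝ) |>.mp hm₂0
    exact_mod_cast this
  -- comparability of m₁, m₂ :
  have hMle : ∀ (u v : ℕ), (u:ℝ)^(1+r 0) < 2*c*(b-a)⁻¹*R^(q+2) →
      2*c*(b-a)⁻¹*R^(q+1) ≤ (v:ℝ)^(1+r 0) → 1 ≤ (v:ℝ) → (u:ℝ) ≤ R * v := by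
    intro u v h1 h2 hv
    by_contra hcon
    push_neg at hcon
    have hv0 : (0:ℝ) < v := by linarith only [hv]
    have h3 : (R*(v:ℝ))^(1+r 0) ≤ (u:ℝ)^(1+r 0) :=
      Real.rpow_le_rpow (by positivity) hcon.le (by linarith only [hr0pos])
    have h4 : (R*(v:ℝ))^(1+r 0) = R^((1:ℝ)+r 0) * (v:ℝ)^(1+r 0) :=
      Real.mul_rpow hR0.le hv0.le
    have h5 : R ≤ R^((1:ℝ)+r 0) := by
      calc R = R^(1:ℝ) := (Real.rpow_one R).symm
        _ ≤ R^((1:ℝ)+r 0) := Real.rpow_le_rpow_of_exponent_le hR1.le (by linarith only [hr0pos])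
    have h6 : R^(q+2) = R^(q+1)*R := pow_succ R (q+1)
    have hv1r : (0:ℝ) < (v:ℝ)^(1+r 0) := Real.rpow_pos_of_pos hv0 _
    have h7 : R * (2*c*(b-a)⁻¹*R^(q+1)) ≤ R * (v:ℝ)^(1+r 0) :=
      mul_le_mul_of_nonneg_left h2 hR0.le
    have h8 : R * (v:ℝ)^(1+r 0) ≤ R^((1:ℝ)+r 0) * (v:ℝ)^(1+r 0) :=
      mul_le_mul_of_nonneg_right h5 hv1r.le
    rw [h6] at h1
    rw [h4] at h3
    linarith only [h1, h3, h7, h8]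
  have hMm₁ : ((max m₁ m₂ : ℕ):ℝ) ≤ R * m₁ := by
    rcases max_choice m₁ m₂ with h | h <;> rw [h]
    · nlinarith only [hm₁0, hR1]
    · exact hMle m₂ m₁ hup₂ hlow₁ hm₁1
  have hMm₂ : ((max m₁ m₂ : ℕ):ℝ) ≤ R * m₂ := by
    rcases max_choice m₁ m₂ with h | h <;> rw [h]
    · exact hMle m₁ m₂ hup₁ hlow₂ hm₂1
    · nlinarith only [hm₂0, hR1]
  have hMbound : ((max m₁ m₂ : ℕ):ℝ)^(1+r 0) < 2*c*(b-a)⁻¹*R^(q+2) := by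
    rcases max_choice m₁ m₂ with h | h <;> rw [h]
    · exact hup₁
    · exact hup₂
  have hM1 : (1:ℝ) ≤ ((max m₁ m₂ : ℕ):ℝ) := by
    refine le_trans hm₁1 ?_
    exact_mod_cast Nat.cast_le (α := ℝ) |>.mpr (le_max_left m₁ m₂)
  -- ==== Q ====
  set Q : ℝ := max 1 |(m₁:ℝ) - (m₂:ℝ)| with hQdef
  have hQ1 : 1 ≤ Q := le_max_left _ _
  have hQ0 : 0 < Q := by linarith only [hQ1]
  have hQM : Q ≤ ((max m₁ m₂ : ℕ):ℝ) := by
    apply max_le hM1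
    rw [abs_le]
    constructor
    · have : (m₂:ℝ) ≤ ((max m₁ m₂ : ℕ):ℝ) := by exact_mod_cast le_max_right m₁ m₂
      linarith only [this, hm₁0]
    · have : (m₁:ℝ) ≤ ((max m₁ m₂ : ℕ):ℝ) := by exact_mod_cast le_max_left m₁ m₂
      linarith only [this, hm₂0]
  -- ==== smallness of 2c(b-a)⁻¹ ====
  have hkRlam : k₁ ^ (1 + r 0) ≤ R^(-(lam1:ℝ)) := by
    have e1 : k₁ ≤ Real.exp (-β*lam1) := by
      rw [hk₁]
      have := Real.exp_pos (-β*(lam1:ℝ))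
      nlinarith only [hξn3, this, hξ_pos]
    have e2 : k₁^(1+r 0) ≤ (Real.exp (-β*lam1))^(1+r 0) :=
      Real.rpow_le_rpow hk₁pos.le e1 (by linarith only [hr0pos])
    have e3 : (Real.exp (-β*(lam1:ℝ)))^((1:ℝ)+r 0) = Real.exp ((-β*(lam1:ℝ))*(1+r 0)) :=
      (Real.exp_mul _ _).symm
    have e4 : (-β*(lam1:ℝ))*(1+r 0) = Real.log R * (-(lam1:ℝ)) := by
      rw [← hβr]; ring
    rw [e3, e4, ← Real.rpow_def_of_pos hR0] at e2
    exact e2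
  have hc_small : c * (200 * R^4) ≤ k₁ ^ (1 + r 0) := by
    have hdd : d 0 ≤ (1+d 0)^2 := by nlinarith only [hd0, sq_nonneg (d 0)]
    have t1 : c*(200*R^4)*(d 0) ≤ c*(200*R^4)*(1+d 0)^2 := by
      apply mul_le_mul_of_nonneg_left hdd
      positivity
    have t2 : c*(200*R^4)*(1+d 0)^2 ≤ c * (200*((n:ℝ)+2)*(f₀+dmax2)*(1+d 0)^2*R^4) := by
      have hfac : 200*R^4*(1+d 0)^2 ≤ 200*((n:ℝ)+2)*(f₀+dmax2)*(1+d 0)^2*R^4 := by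
        have hone : (1:ℝ) ≤ ((n:ℝ)+2)*(f₀+dmax2) := by nlinarith only [hn2, hfd1]
        nlinarith only [mul_le_mul_of_nonneg_left hone
          (show (0:ℝ) ≤ 200*R^4*(1+d 0)^2 by positivity)]
      calc c*(200*R^4)*(1+d 0)^2 = c*(200*R^4*(1+d 0)^2) := by ring
        _ ≤ c * (200*((n:ℝ)+2)*(f₀+dmax2)*(1+d 0)^2*R^4) :=
          mul_le_mul_of_nonneg_left hfac hcpos.le
    rw [hckey] at t2
    have t3 : c*(200*R^4)*(d 0) ≤ k₁ ^ (1+r 0) * d 0 := le_trans t1 t2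
    exact le_of_mul_le_mul_right t3 hd0
  have h2c : 2*c*(b-a)⁻¹ ≤ R^((-3:ℝ)-(lam1:ℝ)) := by
    have s1 : 2*c*(b-a)⁻¹ ≤ 2*c*R := by
      have h2c0 : (0:ℝ) ≤ 2*c := by linarith only [hcpos]
      calc 2*c*(b-a)⁻¹ = (2*c)*(b-a)⁻¹ := by ring
        _ ≤ (2*c)*R := mul_le_mul_of_nonneg_left hRinv.le h2c0
        _ = 2*c*R := by ring
    have s2 : (2*c*R)*(100*R^3) ≤ k₁ ^ (1+r 0) := by
      calc (2*c*R)*(100*R^3) = c*(200*R^4) := by ring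
        _ ≤ k₁ ^ (1+r 0) := hc_small
    have s4 : R^(-(lam1:ℝ)) = R^((-3:ℝ)-(lam1:ℝ)) * R^(3:ℕ) := by
      rw [← Real.rpow_natCast R 3, ← Real.rpow_add hR0]
      congr 1; ring
    have h3pos : (0:ℝ) < R^(3:ℕ) := pow_pos hR0 3
    have s5 : (2*c*R*100) * R^(3:ℕ) ≤ R^((-3:ℝ)-(lam1:ℝ)) * R^(3:ℕ) := by
      rw [← s4]
      calc (2*c*R*100) * R^(3:ℕ) = (2*c*R)*(100*R^3) := by ring
        _ ≤ k₁ ^ (1+r 0) := s2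
        _ ≤ R^(-(lam1:ℝ)) := hkRlam
    have s6 : 2*c*R*100 ≤ R^((-3:ℝ)-(lam1:ℝ)) := le_of_mul_le_mul_right s5 h3pos
    nlinarith only [s1, s6, hcpos, hR0]
  -- ==== Q < exp bound ====
  have hQlt : Q < Real.exp (β * ((q:ℝ) - 1 - (lam1:ℝ))) := by
    set Ebd := Real.exp (β * ((q:ℝ) - 1 - (lam1:ℝ))) with hEbd
    have hEpos : 0 < Ebd := Real.exp_pos _
    by_contra hcon
    push_neg at hcon
    have h1 : Ebd^((1:ℝ)+r 0) ≤ Q^((1:ℝ)+r 0) :=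
      Real.rpow_le_rpow hEpos.le hcon (by linarith only [hr0pos])
    have h2 : Q^((1:ℝ)+r 0) ≤ ((max m₁ m₂ : ℕ):ℝ)^((1:ℝ)+r 0) :=
      Real.rpow_le_rpow hQ0.le hQM (by linarith only [hr0pos])
    have h3 : Ebd^((1:ℝ)+r 0) = R^((q:ℝ)-1-(lam1:ℝ)) := by
      rw [hEbd, ← Real.exp_mul]
      rw [Real.rpow_def_of_pos hR0, ← hβr]
      ring_nf
    have h4 : ((max m₁ m₂ : ℕ):ℝ)^(1+r 0) < R^((q:ℝ)-1-(lam1:ℝ)) := by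
      have hq2 : R^(q+2) = R^(((q:ℝ)+2)) := by
        rw [← Real.rpow_natCast R (q+2)]
        norm_num
      have step : 2*c*(b-a)⁻¹*R^(q+2) ≤ R^((-3:ℝ)-(lam1:ℝ)) * R^(((q:ℝ)+2)) := by
        rw [← hq2]
        exact mul_le_mul_of_nonneg_right h2c (by positivity)
      have step2 : R^((-3:ℝ)-(lam1:ℝ)) * R^(((q:ℝ)+2)) = R^((q:ℝ)-1-(lam1:ℝ)) := by
        rw [← Real.rpow_add hR0]
        ring_nf
      linarith only [hMbound, step, step2.le, step2.ge]
    rw [h3] at h1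
    linarith only [h1, h2, h4]
  -- ==== master bound ====
  have master : ∀ (mm : ℕ), 1 ≤ (mm:ℝ) → ((max m₁ m₂ : ℕ):ℝ) ≤ R * mm →
      ∀ (i : Fin (n+2)) (s : ℝ), r i ≤ s → ((mm:ℝ)^s)⁻¹ ≤ R * Q^(-(r i)) := by
    intro mm hmm hRm i s hs
    have hmm0 : (0:ℝ) < mm := by linarith only [hmm]
    have h1 : Q^(r i) ≤ ((max m₁ m₂ : ℕ):ℝ)^(r i) :=
      Real.rpow_le_rpow hQ0.le hQM (hr_pos i).le
    have h2 : ((max m₁ m₂ : ℕ):ℝ)^(r i) ≤ (R*(mm:ℝ))^(r i) :=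
      Real.rpow_le_rpow (Nat.cast_nonneg _) hRm (hr_pos i).le
    have h3 : (R*(mm:ℝ))^(r i) = R^(r i) * (mm:ℝ)^(r i) := Real.mul_rpow hR0.le hmm0.le
    have h4 : R^(r i) ≤ R := by
      calc R^(r i) ≤ R^(1:ℝ) := Real.rpow_le_rpow_of_exponent_le hR1.le (hr1 i)
        _ = R := Real.rpow_one R
    have h5 : (mm:ℝ)^(r i) ≤ (mm:ℝ)^s := Real.rpow_le_rpow_of_exponent_le hmm hs
    have hmri : 0 ≤ (mm:ℝ)^(r i) := (Real.rpow_pos_of_pos hmm0 _).le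
    have h6 : Q^(r i) ≤ R * (mm:ℝ)^s := by
      calc Q^(r i) ≤ R^(r i) * (mm:ℝ)^(r i) := by rw [← h3]; exact h1.trans h2
        _ ≤ R * (mm:ℝ)^s := mul_le_mul h4 h5 hmri hR0.le
    have hms : 0 < (mm:ℝ)^s := Real.rpow_pos_of_pos hmm0 _
    have hQr : 0 < Q^(r i) := Real.rpow_pos_of_pos hQ0 _
    rw [Real.rpow_neg hQ0.le, ← div_eq_mul_inv, inv_eq_one_div, div_le_div_iff₀ hms hQr]
    linarith only [h6]
  -- ==== point facts ====
  obtain ⟨hx₁ab, hx₀₁ab, hxy₁, hΔ₁⟩ := point_facts hcpos hab hba3 hd0 hr0pos hsubI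
    (hθ_lip 0) hm₁1 hj₁ hx₁Δ
  obtain ⟨hx₂ab, hx₀₂ab, hxy₂, hΔ₂⟩ := point_facts hcpos hab hba3 hd0 hr0pos hsubI
    (hθ_lip 0) hm₂1 hj₂ hx₂Δ
  obtain ⟨hy₁I, hcoord₁⟩ := hV₁
  obtain ⟨hy₂I, hcoord₂⟩ := hV₂
  set y₁ := ((p₁ 0 : ℝ) + θ 0 (pieceCenter c a b (d 0) (r 0) m₁ j₁)) / m₁ with hy₁def
  set y₂ := ((p₂ 0 : ℝ) + θ 0 (pieceCenter c a b (d 0) (r 0) m₂ j₂)) / m₂ with hy₂def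
  have hx₁bigI : x₁ ∈ bigI := hsubI hx₁ab
  have hx₂bigI : x₂ ∈ bigI := hsubI hx₂ab
  -- ==== length facts ====
  have hRprod : R^(q+2) * R^((1:ℤ)-q) = R^(3:ℕ) := by
    rw [← zpow_natCast R (q+2), ← zpow_natCast R 3, ← zpow_add₀ (ne_of_gt hR0)]
    congr 1
    push_cast
    ring
  have hhl0 : 0 < hi - lo := by
    rw [hI_len]; exact mul_pos hba (zpow_pos hR0 _)
  have hx₁x₂ : |x₁ - x₂| ≤ hi - lo := by
    rw [abs_le]
    constructor
    · linarith only [hx₁I.1, hx₂I.2]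
    · linarith only [hx₁I.2, hx₂I.1]
  have hm₂split : (m₂:ℝ)^((1:ℝ)+r 0) = m₂ * (m₂:ℝ)^(r 0) := by
    rw [Real.rpow_add hm₂0, Real.rpow_one]
  have hm₁split : (m₁:ℝ)^((1:ℝ)+r 0) = m₁ * (m₁:ℝ)^(r 0) := by
    rw [Real.rpow_add hm₁0, Real.rpow_one]
  have hm₂r0 : (0:ℝ) < (m₂:ℝ)^(r 0) := Real.rpow_pos_of_pos hm₂0 _
  have hBlt : (m₂:ℝ) ≤ 2*c*(b-a)⁻¹*R^(q+2) * ((m₂:ℝ)^(r 0))⁻¹ := by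
    have h := hup₂
    rw [hm₂split] at h
    rw [mul_comm (2*c*(b-a)⁻¹*R^(q+2)) _]
    rw [← div_eq_inv_mul]
    exact (le_div_iff₀ hm₂r0).mpr (by linarith only [h])
  have hBlen : (m₂:ℝ) * (hi - lo) ≤ 2*c*R^(3:ℕ) * ((m₂:ℝ)^(r 0))⁻¹ := by
    calc (m₂:ℝ)*(hi-lo) = (m₂:ℝ)*((b-a)*R^((1:ℤ)-q)) := by rw [hI_len]
      _ ≤ (2*c*(b-a)⁻¹*R^(q+2)*((m₂:ℝ)^(r 0))⁻¹)*((b-a)*R^((1:ℤ)-q)) :=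
          mul_le_mul_of_nonneg_right hBlt (mul_pos hba (zpow_pos hR0 _)).le
      _ = 2*c*((b-a)⁻¹*(b-a))*(R^(q+2)*R^((1:ℤ)-q))*((m₂:ℝ)^(r 0))⁻¹ := by ring
      _ = 2*c*R^(3:ℕ)*((m₂:ℝ)^(r 0))⁻¹ := by
          rw [inv_mul_cancel₀ (ne_of_gt hba), hRprod]; ring
  have hhlB : hi - lo ≤ 2*c*R^(3:ℕ)*((m₂:ℝ)^(r 0))⁻¹ := by
    have h : hi - lo ≤ (m₂:ℝ)*(hi - lo) := by nlinarith only [hhl0, hm₂1]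
    linarith only [h, hBlen]
  -- ==== the integer vector ====
  set w : Fin (n+3) → ℤ := Fin.cons ((m₁:ℤ) - (m₂:ℤ)) (fun i => p₁ i - p₂ i) with hwdef
  have hw0val : w 0 = (m₁:ℤ) - (m₂:ℤ) := rfl
  have hwsucc : ∀ i : Fin (n+2), w i.succ = p₁ i - p₂ i := fun i => by
    rw [hwdef]; simp
  have hwabs : |((w 0 : ℤ):ℝ)| ≤ Q := by
    rw [hw0val]
    push_cast
    exact le_max_right _ _
  have hf₀0 : (0:ℝ) ≤ f₀ := by linarith only [hf₀1]
  -- ==== the coordinatewise smallness ====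
  have hsmall : ∀ i : Fin (n+2),
      |((w 0 : ℤ):ℝ) * φ x₁ i - ((w i.succ : ℤ):ℝ)| < k₁/((n:ℝ)+2) * Q^(-(r i)) := by
    intro i
    rw [hw0val, hwsucc i]
    push_cast
    set u := Q^(-(r i)) with hudef
    have hu : 0 < u := by rw [hudef]; exact Real.rpow_pos_of_pos hQ0 _
    have hRu1 : ((m₁:ℝ)^(r 0))⁻¹ ≤ R*u := by
      rw [hudef]; exact master m₁ hm₁1 hMm₁ i (r 0) (hrle i)
    have hRu1i : ((m₁:ℝ)^(r i))⁻¹ ≤ R*u := by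
      rw [hudef]; exact master m₁ hm₁1 hMm₁ i (r i) le_rfl
    have hRu1' : ((m₁:ℝ)^((1:ℝ)+r 0))⁻¹ ≤ R*u := by
      rw [hudef]
      exact master m₁ hm₁1 hMm₁ i (1+r 0) (by linarith only [hrle i, hr1 i])
    have hRu2 : ((m₂:ℝ)^(r 0))⁻¹ ≤ R*u := by
      rw [hudef]; exact master m₂ hm₂1 hMm₂ i (r 0) (hrle i)
    have hRu2i : ((m₂:ℝ)^(r i))⁻¹ ≤ R*u := by
      rw [hudef]; exact master m₂ hm₂1 hMm₂ i (r i) le_rfl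
    have hRu2' : ((m₂:ℝ)^((1:ℝ)+r 0))⁻¹ ≤ R*u := by
      rw [hudef]
      exact master m₂ hm₂1 hMm₂ i (1+r 0) (by linarith only [hrle i, hr1 i])
    have h8 : 2*c*R^(3:ℕ)*((m₂:ℝ)^(r 0))⁻¹ ≤ 2*R^(3:ℕ)*(c*(R*u)) := by
      calc 2*c*R^(3:ℕ)*((m₂:ℝ)^(r 0))⁻¹ ≤ 2*c*R^(3:ℕ)*(R*u) :=
            mul_le_mul_of_nonneg_left hRu2 (by positivity)
        _ = 2*R^(3:ℕ)*(c*(R*u)) := by ring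
    have hb2 : |x₁ - x₂| ≤ 2*R^(3:ℕ)*(c*(R*u)) := le_trans (le_trans hx₁x₂ hhlB) h8
    by_cases hi : i = 0
    · subst hi
      rw [hφ_first x₁ hx₁bigI]
      have hT1 : |(m₁:ℝ)*x₁ - (p₁ 0:ℝ) - θ 0 x₁| ≤ c*(R*u) := by
        refine le_trans hΔ₁.le ?_
        rw [div_eq_mul_inv]
        exact mul_le_mul_of_nonneg_left hRu1 hcpos.le
      have hT2 : |(m₂:ℝ)*x₂ - (p₂ 0:ℝ) - θ 0 x₂| ≤ c*(R*u) := by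
        refine le_trans hΔ₂.le ?_
        rw [div_eq_mul_inv]
        exact mul_le_mul_of_nonneg_left hRu2 hcpos.le
      have hT3 : |(m₂:ℝ)*(x₁ - x₂)| ≤ 2*R^(3:ℕ)*(c*(R*u)) := by
        rw [abs_mul, abs_of_nonneg hm₂0.le]
        calc (m₂:ℝ)*|x₁-x₂| ≤ (m₂:ℝ)*(hi - lo) :=
              mul_le_mul_of_nonneg_left hx₁x₂ hm₂0.le
          _ ≤ 2*c*R^(3:ℕ)*((m₂:ℝ)^(r 0))⁻¹ := hBlen
          _ ≤ 2*R^(3:ℕ)*(c*(R*u)) := h8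
      have hT4 : |θ 0 x₁ - θ 0 x₂| ≤ 2*(d 0)*R^(3:ℕ)*(c*(R*u)) := by
        calc |θ 0 x₁ - θ 0 x₂| ≤ d 0 * |x₁ - x₂| := hθ_lip 0 x₁ hx₁bigI x₂ hx₂bigI
          _ ≤ d 0 * (2*R^(3:ℕ)*(c*(R*u))) := mul_le_mul_of_nonneg_left hb2 hd0.le
          _ = 2*(d 0)*R^(3:ℕ)*(c*(R*u)) := by ring
      have hid : ((m₁:ℝ) - m₂)*x₁ - ((p₁ 0:ℝ) - p₂ 0) =
          ((m₁:ℝ)*x₁ - (p₁ 0:ℝ) - θ 0 x₁) - ((m₂:ℝ)*x₂ - (p₂ 0:ℝ) - θ 0 x₂)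
          - (m₂:ℝ)*(x₁ - x₂) + (θ 0 x₁ - θ 0 x₂) := by ring
      have habs : |((m₁:ℝ) - m₂)*x₁ - ((p₁ 0:ℝ) - p₂ 0)| ≤
          |(m₁:ℝ)*x₁ - (p₁ 0:ℝ) - θ 0 x₁| + |(m₂:ℝ)*x₂ - (p₂ 0:ℝ) - θ 0 x₂|
          + |(m₂:ℝ)*(x₁ - x₂)| + |θ 0 x₁ - θ 0 x₂| := by
        rw [hid]; exact abs4 _ _ _ _
      have hR3 : (1:ℝ) ≤ R^(3:ℕ) := one_le_pow₀ hR1.le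
      have hcRu : (0:ℝ) ≤ c*(R*u) := by positivity
      have hsum : |((m₁:ℝ) - m₂)*x₁ - ((p₁ 0:ℝ) - p₂ 0)| ≤
          (4*R^(3:ℕ)*(1 + d 0))*(c*(R*u)) := by
        have X1 : (0:ℝ) ≤ (R^(3:ℕ) - 1)*(c*(R*u)) :=
          mul_nonneg (by linarith only [hR3]) hcRu
        have X2 : (0:ℝ) ≤ (d 0)*(R^(3:ℕ)*(c*(R*u))) :=
          mul_nonneg hd0.le (mul_nonneg (pow_nonneg hR0.le 3) hcRu)
        linarith only [habs, hT1, hT2, hT3, hT4, X1, X2]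
      have hfin : (4*R^(3:ℕ)*(1+d 0))*(c*(R*u)) < (k₁/((n:ℝ)+2))*u := by
        calc (4*R^(3:ℕ)*(1+d 0))*(c*(R*u)) = (4*c*(R^4)*(1+d 0))*u := by ring
          _ < (k₁/((n:ℝ)+2))*u := mul_lt_mul_of_pos_right hnum0 hu
      exact lt_of_le_of_lt hsum hfin
    · -- i ≠ 0
      have hc₁ := hcoord₁ i hi
      have hc₂ := hcoord₂ i hi
      have hfdi : (0:ℝ) ≤ f₀ + d i := by linarith only [hf₀1, hd i]
      have hT3 : |(m₁:ℝ)*φ y₁ i - (p₁ i:ℝ) - θ i y₁| ≤ (f₀ + d i)*(c*(R*u)) := by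
        have heq : |(m₁:ℝ)*φ y₁ i - (p₁ i:ℝ) - θ i y₁|
            = (m₁:ℝ) * |φ y₁ i - ((p₁ i:ℝ) + θ i y₁)/m₁| := by
          rw [show (m₁:ℝ) * |φ y₁ i - ((p₁ i:ℝ) + θ i y₁)/m₁|
              = |(m₁:ℝ)*(φ y₁ i - ((p₁ i:ℝ) + θ i y₁)/m₁)| from by
            rw [abs_mul, abs_of_nonneg hm₁0.le]]
          congr 1
          field_simp
          ring
        rw [heq]
        refine le_trans (mul_le_mul_of_nonneg_left hc₁.le hm₁0.le) ?_
        have hsplit : (m₁:ℝ)^(1+r i) = m₁*(m₁:ℝ)^(r i) := by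
          rw [Real.rpow_add hm₁0, Real.rpow_one]
        have heq2 : (m₁:ℝ) * ((f₀ + d i)*c/(m₁:ℝ)^(1+r i))
            = (f₀ + d i)*c*((m₁:ℝ)^(r i))⁻¹ := by
          rw [hsplit]; field_simp
        rw [heq2]
        calc (f₀ + d i)*c*((m₁:ℝ)^(r i))⁻¹ ≤ (f₀ + d i)*c*(R*u) :=
              mul_le_mul_of_nonneg_left hRu1i (mul_nonneg hfdi hcpos.le)
          _ = (f₀ + d i)*(c*(R*u)) := by ring
      have hT4 : |(m₂:ℝ)*φ y₂ i - (p₂ i:ℝ) - θ i y₂| ≤ (f₀ + d i)*(c*(R*u)) := by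
        have heq : |(m₂:ℝ)*φ y₂ i - (p₂ i:ℝ) - θ i y₂|
            = (m₂:ℝ) * |φ y₂ i - ((p₂ i:ℝ) + θ i y₂)/m₂| := by
          rw [show (m₂:ℝ) * |φ y₂ i - ((p₂ i:ℝ) + θ i y₂)/m₂|
              = |(m₂:ℝ)*(φ y₂ i - ((p₂ i:ℝ) + θ i y₂)/m₂)| from by
            rw [abs_mul, abs_of_nonneg hm₂0.le]]
          congr 1
          field_simp
          ring
        rw [heq]
        refine le_trans (mul_le_mul_of_nonneg_left hc₂.le hm₂0.le) ?_
        have hsplit : (m₂:ℝ)^(1+r i) = m₂*(m₂:ℝ)^(r i) := by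
          rw [Real.rpow_add hm₂0, Real.rpow_one]
        have heq2 : (m₂:ℝ) * ((f₀ + d i)*c/(m₂:ℝ)^(1+r i))
            = (f₀ + d i)*c*((m₂:ℝ)^(r i))⁻¹ := by
          rw [hsplit]; field_simp
        rw [heq2]
        calc (f₀ + d i)*c*((m₂:ℝ)^(r i))⁻¹ ≤ (f₀ + d i)*c*(R*u) :=
              mul_le_mul_of_nonneg_left hRu2i (mul_nonneg hfdi hcpos.le)
          _ = (f₀ + d i)*(c*(R*u)) := by ring
      have hT1 : |(m₁:ℝ)*(φ x₁ i - φ y₁ i)| ≤ 7/6*f₀*(c*(R*u)) := by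
        rw [abs_mul, abs_of_nonneg hm₁0.le]
        have hl := hφ_lip i x₁ hx₁bigI y₁ hy₁I
        have h2 : |φ x₁ i - φ y₁ i| ≤ f₀*(7/6*c/(m₁:ℝ)^(1+r 0)) :=
          le_trans hl (mul_le_mul_of_nonneg_left hxy₁ hf₀0)
        refine le_trans (mul_le_mul_of_nonneg_left h2 hm₁0.le) ?_
        have heq : (m₁:ℝ)*(f₀*(7/6*c/(m₁:ℝ)^(1+r 0))) = 7/6*f₀*c*((m₁:ℝ)^(r 0))⁻¹ := by
          rw [show (m₁:ℝ)^(1+r 0) = m₁*(m₁:ℝ)^(r 0) from hm₁split]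
          field_simp
        rw [heq]
        calc 7/6*f₀*c*((m₁:ℝ)^(r 0))⁻¹ ≤ 7/6*f₀*c*(R*u) :=
              mul_le_mul_of_nonneg_left hRu1
                (mul_nonneg (mul_nonneg (by norm_num) hf₀0) hcpos.le)
          _ = 7/6*f₀*(c*(R*u)) := by ring
      have hb1 : |x₁ - y₁| ≤ 7/6*(c*(R*u)) := by
        refine le_trans hxy₁ ?_
        rw [div_eq_mul_inv]
        calc 7/6*c*((m₁:ℝ)^(1+r 0))⁻¹ ≤ 7/6*c*(R*u) :=
              mul_le_mul_of_nonneg_left hRu1' (by positivity)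
          _ = 7/6*(c*(R*u)) := by ring
      have hb3 : |x₂ - y₂| ≤ 7/6*(c*(R*u)) := by
        refine le_trans hxy₂ ?_
        rw [div_eq_mul_inv]
        calc 7/6*c*((m₂:ℝ)^(1+r 0))⁻¹ ≤ 7/6*c*(R*u) :=
              mul_le_mul_of_nonneg_left hRu2' (by positivity)
          _ = 7/6*(c*(R*u)) := by ring
      have hT2 : |(m₂:ℝ)*(φ x₁ i - φ y₂ i)| ≤ f₀*(2*R^(3:ℕ) + 7/6)*(c*(R*u)) := by
        rw [abs_mul, abs_of_nonneg hm₂0.le]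
        have hl := hφ_lip i x₁ hx₁bigI y₂ hy₂I
        have htri : |x₁ - y₂| ≤ |x₁ - x₂| + |x₂ - y₂| := by
          rw [show x₁ - y₂ = (x₁ - x₂) + (x₂ - y₂) from by ring]
          exact abs_add_le _ _
        have h5 : (m₂:ℝ)*|x₂ - y₂| ≤ 7/6*c*((m₂:ℝ)^(r 0))⁻¹ := by
          refine le_trans (mul_le_mul_of_nonneg_left hxy₂ hm₂0.le) (le_of_eq ?_)
          rw [show (m₂:ℝ)^(1+r 0) = m₂*(m₂:ℝ)^(r 0) from hm₂split]
          field_simp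
        have h6 : (m₂:ℝ)*|x₁ - x₂| ≤ 2*c*R^(3:ℕ)*((m₂:ℝ)^(r 0))⁻¹ :=
          le_trans (mul_le_mul_of_nonneg_left hx₁x₂ hm₂0.le) hBlen
        have h9 : 7/6*c*((m₂:ℝ)^(r 0))⁻¹ ≤ 7/6*(c*(R*u)) := by
          calc 7/6*c*((m₂:ℝ)^(r 0))⁻¹ ≤ 7/6*c*(R*u) :=
                mul_le_mul_of_nonneg_left hRu2 (by positivity)
            _ = 7/6*(c*(R*u)) := by ring
        have hlf : (m₂:ℝ)*|φ x₁ i - φ y₂ i|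
            ≤ f₀*((m₂:ℝ)*|x₁ - x₂|) + f₀*((m₂:ℝ)*|x₂ - y₂|) := by
          have ha := mul_le_mul_of_nonneg_left hl hm₂0.le
          have hbb := mul_le_mul_of_nonneg_left htri (mul_nonneg hm₂0.le hf₀0)
          nlinarith only [ha, hbb]
        have h10 : f₀*((m₂:ℝ)*|x₁-x₂|) + f₀*((m₂:ℝ)*|x₂-y₂|)
            ≤ f₀*(2*R^(3:ℕ)*(c*(R*u))) + f₀*(7/6*(c*(R*u))) :=
          add_le_add (mul_le_mul_of_nonneg_left (h6.trans h8) hf₀0)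
            (mul_le_mul_of_nonneg_left (h5.trans h9) hf₀0)
        calc (m₂:ℝ)*|φ x₁ i - φ y₂ i| ≤ _ := hlf
          _ ≤ _ := h10
          _ = f₀*(2*R^(3:ℕ) + 7/6)*(c*(R*u)) := by ring
      have hT5 : |θ i y₁ - θ i y₂| ≤ (d i)*(2*R^(3:ℕ) + 7/3)*(c*(R*u)) := by
        have hl := hθ_lip i y₁ hy₁I y₂ hy₂I
        have htri : |y₁ - y₂| ≤ |x₁ - y₁| + |x₁ - x₂| + |x₂ - y₂| := by
          rw [show y₁ - y₂ = -(x₁ - y₁) + (x₁ - x₂) + (x₂ - y₂) from by ring]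
          calc |(-(x₁ - y₁) + (x₁ - x₂)) + (x₂ - y₂)|
              ≤ |(-(x₁-y₁) + (x₁-x₂))| + |x₂-y₂| := abs_add_le _ _
            _ ≤ |-(x₁-y₁)| + |x₁-x₂| + |x₂-y₂| := by
                linarith only [abs_add_le (-(x₁-y₁)) (x₁-x₂)]
            _ = |x₁-y₁| + |x₁-x₂| + |x₂-y₂| := by rw [abs_neg]
        calc |θ i y₁ - θ i y₂| ≤ d i * |y₁ - y₂| := hl
          _ ≤ d i * (7/6*(c*(R*u)) + 2*R^(3:ℕ)*(c*(R*u)) + 7/6*(c*(R*u))) :=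
              mul_le_mul_of_nonneg_left
                (by linarith only [htri, hb1, hb2, hb3]) (hd i).le
          _ = (d i)*(2*R^(3:ℕ) + 7/3)*(c*(R*u)) := by ring
      have hid : ((m₁:ℝ) - m₂)*φ x₁ i - ((p₁ i:ℝ) - p₂ i) =
          ((m₁:ℝ)*(φ x₁ i - φ y₁ i)) - ((m₂:ℝ)*(φ x₁ i - φ y₂ i))
          + ((m₁:ℝ)*φ y₁ i - (p₁ i:ℝ) - θ i y₁) - ((m₂:ℝ)*φ y₂ i - (p₂ i:ℝ) - θ i y₂)
          + (θ i y₁ - θ i y₂) := by ring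
      have habs : |((m₁:ℝ) - m₂)*φ x₁ i - ((p₁ i:ℝ) - p₂ i)| ≤
          |(m₁:ℝ)*(φ x₁ i - φ y₁ i)| + |(m₂:ℝ)*(φ x₁ i - φ y₂ i)|
          + |(m₁:ℝ)*φ y₁ i - (p₁ i:ℝ) - θ i y₁| + |(m₂:ℝ)*φ y₂ i - (p₂ i:ℝ) - θ i y₂|
          + |θ i y₁ - θ i y₂| := by
        rw [hid]; exact abs5 _ _ _ _ _
      have hR3 : (1:ℝ) ≤ R^(3:ℕ) := one_le_pow₀ hR1.le
      have hcoef : 7/6*f₀ + f₀*(2*R^(3:ℕ) + 7/6) + (f₀ + d i) + (f₀ + d i)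
          + (d i)*(2*R^(3:ℕ) + 7/3) ≤ 11*R^(3:ℕ)*(f₀ + dmax2) := by
        have P1 : (0:ℝ) ≤ (R^(3:ℕ) - 1)*f₀ := mul_nonneg (by linarith only [hR3]) hf₀0
        have P2 : (0:ℝ) ≤ (R^(3:ℕ) - 1)*(d i) := mul_nonneg (by linarith only [hR3]) (hd i).le
        have P3 : 11*R^(3:ℕ)*(d i) ≤ 11*R^(3:ℕ)*dmax2 :=
          mul_le_mul_of_nonneg_left (hdmax_ge i hi) (by positivity)
        nlinarith only [P1, P2, P3, hf₀0, (hd i).le, hR3]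
      have hsum : |((m₁:ℝ) - m₂)*φ x₁ i - ((p₁ i:ℝ) - p₂ i)| ≤
          (11*R^(3:ℕ)*(f₀+dmax2))*(c*(R*u)) := by
        have hstep : |(m₁:ℝ)*(φ x₁ i - φ y₁ i)| + |(m₂:ℝ)*(φ x₁ i - φ y₂ i)|
            + |(m₁:ℝ)*φ y₁ i - (p₁ i:ℝ) - θ i y₁| + |(m₂:ℝ)*φ y₂ i - (p₂ i:ℝ) - θ i y₂|
            + |θ i y₁ - θ i y₂|
            ≤ (7/6*f₀ + f₀*(2*R^(3:ℕ) + 7/6) + (f₀ + d i) + (f₀ + d i)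
              + (d i)*(2*R^(3:ℕ) + 7/3))*(c*(R*u)) := by
          linarith only [hT1, hT2, hT3, hT4, hT5]
        refine le_trans habs (le_trans hstep ?_)
        exact mul_le_mul_of_nonneg_right hcoef (by positivity)
      have hfin : (11*R^(3:ℕ)*(f₀+dmax2))*(c*(R*u)) < (k₁/((n:ℝ)+2))*u := by
        calc (11*R^(3:ℕ)*(f₀+dmax2))*(c*(R*u)) = (11*c*(R^4)*(f₀+dmax2))*u := by ring
          _ < (k₁/((n:ℝ)+2))*u := mul_lt_mul_of_pos_right hnum hu
      exact lt_of_le_of_lt hsum hfin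
  -- ==== conclusion ====
  have hnos := hno_sol x₁ hx₁I Q hQ1 hQlt
  have hwzero : w = 0 := by
    by_contra hne
    exact hnos ⟨w, hne, hwabs, hsmall⟩
  have hm12 : m₁ = m₂ := by
    have h0 : w 0 = 0 := by rw [hwzero]; rfl
    rw [hw0val] at h0
    omega
  intro i
  have hpi : p₁ i = p₂ i := by
    have h0 : w i.succ = 0 := by rw [hwzero]; rfl
    rw [hwsucc i] at h0
    omega
  rw [hm12, hpi]
end

section
/- With the notation of the context, assume R ∈ ℕ, let q ∈ ℕ and let J ⊆ I₀ be a closed interval with |J| = |I₀|·R^{−(q−1)} such that for every x ∈ J and every real Q with 1 ≤ Q < e^{β(q−1−λ₁)}, there is no nonzero (m, p₁,…,pₙ) ∈ ℤ^{n+1} with |m| ≤ Q and |m·φᵢ(x) − pᵢ| < (k₁/n)·Q^{−rᵢ} for all 1 ≤ i ≤ n. Partition J into R² consecutive closed subintervals of equal length |I₀|·R^{−(q+1)}. Then at most 6 of these R² subintervals intersect the set ⋃_{v = p/m ∈ V_q} ⋃_{j : v ∈ V^{j,m}} Δ^{j,m}(v). -/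
set_option maxHeartbeats 1000000

open Filter Set

/- STATEMENT 13: Proposition `fpq`: at most 6 of the `R²` equal subintervals of
an interval `J ∈ 𝒥_{q-1}` meet the union of dangerous domains of `V_q`.
The paper's dimension `n ≥ 2` is `n + 2` below; here `R ∈ ℕ`. -/

theorem stmt13 (n : ℕ) (r : Fin (n + 2) → ℝ)
    (hr_pos : ∀ i, 0 < r i) (hr_sorted : ∀ i j : Fin (n + 2), i ≤ j → r j ≤ r i)
    (hr_sum : ∑ i, r i = 1)
    (a b : ℝ) (hab : a < b) (hlen : 3 * (b - a) ≤ 1)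
    (R : ℕ) (hR : max 1 (b - a)⁻¹ < (R : ℝ))
    (β : ℝ) (hβ : β = Real.log (R : ℝ) / (1 + r 0))
    (ξ : ℝ) (hξ_pos : 0 < ξ) (hξ : ξ < ((n : ℝ) + 3) / Real.exp 1)
    (lam1 : ℤ)
    (hlam1 : lam1 = ⌈Real.log (((n : ℝ) + 3) / ξ) / (β * r (Fin.last (n + 1)))⌉)
    (k₁ : ℝ) (hk₁ : k₁ = ξ / ((n : ℝ) + 3) * Real.exp (-β * lam1))
    (bigI : Set ℝ)
    (hbigI : bigI = Icc ((a + b) / 2 - (3 : ℝ) ^ (n + 3) * (b - a) / 2)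
      ((a + b) / 2 + (3 : ℝ) ^ (n + 3) * (b - a) / 2))
    (φ φd : ℝ → Fin (n + 2) → ℝ)
    (hφ_diff : ∀ (i : Fin (n + 2)), ∀ x ∈ bigI,
      HasDerivWithinAt (fun t => φ t i) (φd x i) bigI x)
    (hφd_cont : ∀ i : Fin (n + 2), ContinuousOn (fun x => φd x i) bigI)
    (hφ_first : ∀ x ∈ bigI, φ x 0 = x)
    (f₀ : ℝ) (hf₀ : f₀ = 1 + sSup {y | ∃ x ∈ bigI, ∃ i : Fin (n + 2), y = |φd x i|})
    (θ : Fin (n + 2) → ℝ → ℝ) (d : Fin (n + 2) → ℝ) (hd : ∀ i, 0 < d i)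
    (hθ_lip : ∀ i, ∀ x ∈ bigI, ∀ y ∈ bigI, |θ i x - θ i y| ≤ d i * |x - y|)
    (dmax2 : ℝ) (hdmax2 : dmax2 = sSup {y | ∃ i : Fin (n + 2), i ≠ 0 ∧ y = d i})
    (c : ℝ)
    (hc : c = k₁ ^ (1 + r 0) * d 0
      / (200 * ((n : ℝ) + 2) * (f₀ + dmax2) * (1 + d 0) ^ 2 * (R : ℝ) ^ 4))
    (q : ℕ) (lo hi : ℝ) (hI_sub : Icc lo hi ⊆ Icc a b)
    (hI_len : hi - lo = (b - a) * (R : ℝ) ^ (1 - (q : ℤ)))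
    -- no small nonzero solutions of the simultaneous system on `J`
    (hno_sol : ∀ x ∈ Icc lo hi, ∀ Q : ℝ, 1 ≤ Q →
      Q < Real.exp (β * ((q : ℝ) - 1 - (lam1 : ℝ))) →
      ¬ ∃ v : Fin (n + 3) → ℤ, v ≠ 0 ∧ |(v 0 : ℝ)| ≤ Q ∧
        ∀ i : Fin (n + 2),
          |(v 0 : ℝ) * φ x i - (v i.succ : ℝ)| < (k₁ / ((n : ℝ) + 2)) * Q ^ (-(r i)))
    -- the common length of the `R²` subintervals of `J`
    (len : ℝ) (hlen_def : len = (b - a) * (R : ℝ) ^ (-(q : ℤ) - 1)) :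
    Set.encard {k : ℕ | k < R ^ 2 ∧
        (Icc (lo + (k : ℝ) * len) (lo + ((k : ℝ) + 1) * len) ∩
          ⋃ m : ℕ, ⋃ p : Fin (n + 2) → ℤ, ⋃ j : ℕ,
            ⋃ (_ : memVq n bigI φ θ d r f₀ c a b (R : ℝ) q m p ∧
              1 ≤ j ∧ j ≤ mstar c (d 0) (r 0) m ∧
              memV n bigI φ θ d r f₀ c a b m j p),
              deltaSet (θ 0) c a b (d 0) (r 0) m j (p 0)).Nonempty}
      ≤ 6 := by
  classical
  -- ===== basic positivity and numeric facts =====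
  have hba : 0 < b - a := sub_pos.2 hab
  have hbainv : (3:ℝ) ≤ (b - a)⁻¹ := by
    rw [inv_eq_one_div, le_div_iff₀ hba]; linarith only [hlen]
  have hbainv_pos : 0 < (b - a)⁻¹ := by positivity
  have hR1 : (1:ℝ) < (R:ℝ) := lt_of_le_of_lt (le_max_left _ _) hR
  have hRba : (b - a)⁻¹ < (R:ℝ) := lt_of_le_of_lt (le_max_right _ _) hR
  have hR0 : (0:ℝ) < (R:ℝ) := by linarith only [hR1]
  have hR2 : (2:ℝ) ≤ (R:ℝ) := by
    have h1 : 1 < R := by exact_mod_cast hR1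
    have h2 : 2 ≤ R := h1
    exact_mod_cast h2
  have hr0pos := hr_pos 0
  have hrle : ∀ i, r i ≤ r 0 := fun i => hr_sorted 0 i (Fin.zero_le i)
  have hr01 : r 0 ≤ 1 := by
    rw [← hr_sum]
    exact Finset.single_le_sum (fun i _ => (hr_pos i).le) (Finset.mem_univ 0)
  have h1r0 : (0:ℝ) < 1 + r 0 := by linarith
  have h1r02 : 1 + r 0 ≤ 2 := by linarith
  have hβpos : 0 < β := by
    rw [hβ]; exact div_pos (Real.log_pos hR1) h1r0
  have hlogR : Real.log (R:ℝ) = β * (1 + r 0) := by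
    rw [hβ]; field_simp
  have hn2 : (2:ℝ) ≤ (n:ℝ) + 2 := by
    have h := Nat.cast_nonneg (α := ℝ) n
    linarith only [h]
  have hn3pos : (0:ℝ) < (n:ℝ) + 3 := by
    have h := Nat.cast_nonneg (α := ℝ) n
    linarith only [h]
  -- lam1 ≥ 0
  have hlam1_nonneg : (0:ℝ) ≤ (lam1:ℝ) := by
    have he1 : (1:ℝ) < Real.exp 1 := by
      have h := Real.add_one_lt_exp (x := 1) (by norm_num); linarith only [h]
    have hξn3 : ξ < (n:ℝ) + 3 := by
      have h2 : ((n:ℝ)+3) / Real.exp 1 ≤ ((n:ℝ)+3) / 1 := by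
        apply div_le_div_of_nonneg_left (by linarith only [hn3pos]) (by norm_num) he1.le
      simp at h2; linarith only [h2, hξ]
    have harg : 1 < ((n:ℝ)+3)/ξ := (one_lt_div hξ_pos).2 hξn3
    have hnum : 0 < Real.log (((n:ℝ)+3)/ξ) := Real.log_pos harg
    have hden : 0 < β * r (Fin.last (n+1)) := mul_pos hβpos (hr_pos _)
    have ht : 0 < Real.log (((n:ℝ)+3)/ξ) / (β * r (Fin.last (n+1))) :=
      div_pos hnum hden
    have := Int.le_ceil (Real.log (((n:ℝ)+3)/ξ) / (β * r (Fin.last (n+1))))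
    rw [hlam1]; push_cast
    calc (0:ℝ) ≤ Real.log (((n:ℝ)+3)/ξ) / (β * r (Fin.last (n+1))) := ht.le
      _ ≤ _ := this
  have hk₁pos : 0 < k₁ := by
    rw [hk₁]
    exact mul_pos (div_pos hξ_pos hn3pos) (Real.exp_pos _)
  have hξn3' : ξ / ((n:ℝ)+3) ≤ 1 := by
    rw [div_le_one hn3pos]
    have he1 : (1:ℝ) < Real.exp 1 := by
      have h := Real.add_one_lt_exp (x := 1) (by norm_num); linarith only [h]
    have h2 : ((n:ℝ)+3) / Real.exp 1 ≤ ((n:ℝ)+3) / 1 := by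
      apply div_le_div_of_nonneg_left (by linarith only [hn3pos]) (by norm_num) he1.le
    simp at h2; linarith only [h2, hξ]
  have hexpneg : Real.exp (-β * lam1) ≤ 1 := by
    rw [show -β * (lam1:ℝ) = -(β * lam1) by ring]
    rw [Real.exp_le_one_iff]
    have h := mul_nonneg hβpos.le hlam1_nonneg
    linarith only [h]
  have hk₁1 : k₁ ≤ 1 := by
    rw [hk₁]
    calc ξ / ((n:ℝ)+3) * Real.exp (-β*lam1) ≤ 1 * 1 :=
      mul_le_mul hξn3' hexpneg (Real.exp_pos _).le zero_le_one
    _ = 1 := by ring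
  have hk₁exp : k₁ ≤ Real.exp (-β * lam1) := by
    rw [hk₁]
    calc ξ / ((n:ℝ)+3) * Real.exp (-β*lam1) ≤ 1 * Real.exp (-β*lam1) :=
      mul_le_mul_of_nonneg_right hξn3' (Real.exp_pos _).le
    _ = _ := by ring
  -- ===== bigI facts =====
  have h3pow : (1:ℝ) ≤ 3 ^ (n+3) := one_le_pow₀ (by norm_num)
  have hbigI_sub : Icc a b ⊆ bigI := by
    have hpow_ba : (b-a) ≤ 3^(n+3)*(b-a) := le_mul_of_one_le_left hba.le h3pow
    rw [hbigI]
    apply Icc_subset_Icc (by linarith only [hpow_ba]) (by linarith only [hpow_ba])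
  have hconv : Convex ℝ bigI := by rw [hbigI]; exact convex_Icc _ _
  have hcomp : IsCompact bigI := by rw [hbigI]; exact isCompact_Icc
  have habigI : a ∈ bigI := hbigI_sub ⟨le_refl a, hab.le⟩
  -- ===== f₀ facts =====
  have hS_bdd : BddAbove {y | ∃ x ∈ bigI, ∃ i : Fin (n + 2), y = |φd x i|} := by
    have hsub : {y | ∃ x ∈ bigI, ∃ i : Fin (n + 2), y = |φd x i|}
        ⊆ ⋃ i : Fin (n+2), (fun x => |φd x i|) '' bigI := by
      rintro y ⟨x, hx, i, rfl⟩
      exact mem_iUnion.2 ⟨i, ⟨x, hx, rfl⟩⟩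
    refine BddAbove.mono hsub ?_
    rw [← Set.biUnion_univ]
    exact (Set.finite_univ.bddAbove_biUnion).2
      (fun i _ => (hcomp.image_of_continuousOn (hφd_cont i).abs).bddAbove)
  have hf0_bound : ∀ x ∈ bigI, ∀ i : Fin (n+2), |φd x i| ≤ f₀ := by
    intro x hx i
    have h1 : |φd x i| ≤ sSup {y | ∃ x ∈ bigI, ∃ i : Fin (n + 2), y = |φd x i|} :=
      le_csSup hS_bdd ⟨x, hx, i, rfl⟩
    rw [hf₀]; linarith only [h1]
  have hf01 : 1 ≤ f₀ := by
    have h0 : (0:ℝ) ≤ |φd a 0| := abs_nonneg _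
    have h1 : |φd a 0| ≤ sSup {y | ∃ x ∈ bigI, ∃ i : Fin (n + 2), y = |φd x i|} :=
      le_csSup hS_bdd ⟨a, habigI, 0, rfl⟩
    rw [hf₀]; linarith only [h0, h1]
  have hφ_lip : ∀ i : Fin (n+2), ∀ x ∈ bigI, ∀ y ∈ bigI,
      |φ x i - φ y i| ≤ f₀ * |x - y| := by
    intro i x hx y hy
    have := hconv.norm_image_sub_le_of_norm_hasDerivWithin_le (hφ_diff i)
      (fun t ht => by rw [Real.norm_eq_abs]; exact hf0_bound t ht i) hy hx
    simpa [Real.norm_eq_abs] using this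
  -- ===== dmax2 facts =====
  have hi1 : (⟨1, by omega⟩ : Fin (n+2)) ≠ 0 := by
    intro h; exact absurd (congrArg Fin.val h) (by norm_num)
  have hD_bdd : BddAbove {y | ∃ i : Fin (n + 2), i ≠ 0 ∧ y = d i} := by
    apply Set.Finite.bddAbove
    apply Set.Finite.subset (Set.finite_range d)
    rintro y ⟨i, _, rfl⟩; exact ⟨i, rfl⟩
  have hdmax2_ge : ∀ i : Fin (n+2), i ≠ 0 → d i ≤ dmax2 := by
    intro i hi
    rw [hdmax2]; exact le_csSup hD_bdd ⟨i, hi, rfl⟩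
  have hdmax2pos : 0 < dmax2 :=
    lt_of_lt_of_le (hd _) (hdmax2_ge ⟨1, by omega⟩ hi1)
  have hfd1 : (1:ℝ) ≤ f₀ + dmax2 := by linarith only [hf01, hdmax2pos]
  -- ===== c facts =====
  have hKpos : 0 < k₁ ^ ((1:ℝ) + r 0) := Real.rpow_pos_of_pos hk₁pos _
  have hKle : k₁ ^ ((1:ℝ) + r 0) ≤ k₁ := by
    have := Real.rpow_le_rpow_of_exponent_ge hk₁pos hk₁1 (by linarith : (1:ℝ) ≤ 1 + r 0)
    rwa [Real.rpow_one] at this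
  have hR4pos : (0:ℝ) < (R:ℝ)^4 := by positivity
  have hden_pos : 0 < 200 * ((n:ℝ)+2) * (f₀ + dmax2) * (1 + d 0)^2 * (R:ℝ)^4 := by
    have h1 : (0:ℝ) < (1 + d 0)^2 := pow_pos (by linarith only [hd 0]) 2
    exact mul_pos (mul_pos (mul_pos (mul_pos (by norm_num)
      (by linarith only [hn2])) (by linarith only [hfd1])) h1) hR4pos
  have hcpos : 0 < c := by
    rw [hc]; exact div_pos (mul_pos hKpos (hd 0)) hden_pos
  have hcK : c * (200 * ((n:ℝ)+2) * (f₀ + dmax2) * (1 + d 0)^2 * (R:ℝ)^4)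
      = k₁ ^ ((1:ℝ) + r 0) * d 0 := by
    rw [hc]; exact div_mul_cancel₀ _ (ne_of_gt hden_pos)
  have h4d : 4 * d 0 ≤ (1 + d 0)^2 := by linarith only [sq_nonneg (1 - d 0)]
  have hd0 := hd 0
  -- c ≤ K/(1600 R⁴)
  have hNF2 : (2:ℝ) ≤ ((n:ℝ)+2) * (f₀+dmax2) := by nlinarith only [hn2, hfd1]
  have hc_le : c * (1600 * (R:ℝ)^4) ≤ k₁ ^ ((1:ℝ) + r 0) := by
    have h1 : c * (1600 * d 0 * (R:ℝ)^4)
        ≤ c * (200 * ((n:ℝ)+2) * (f₀ + dmax2) * (1 + d 0)^2 * (R:ℝ)^4) := by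
      apply mul_le_mul_of_nonneg_left _ hcpos.le
      have e1 : 4*(d 0)*(R:ℝ)^4 ≤ (1+d 0)^2*(R:ℝ)^4 :=
        mul_le_mul_of_nonneg_right h4d hR4pos.le
      have e3 : (0:ℝ) ≤ (1+d 0)^2*(R:ℝ)^4 := by positivity
      have e4 := mul_le_mul_of_nonneg_right hNF2 e3
      linarith only [e1, e4]
    rw [hcK] at h1
    have h2 : c * (1600 * (R:ℝ)^4) * d 0 ≤ k₁ ^ ((1:ℝ) + r 0) * d 0 := by
      linarith only [h1]
    exact le_of_mul_le_mul_right h2 hd0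
  -- c(f₀+dmax2) ≤ K/(800(n+2)R⁴)
  have hcf : c * (f₀ + dmax2) * (800 * ((n:ℝ)+2) * (R:ℝ)^4) ≤ k₁ ^ ((1:ℝ) + r 0) := by
    have h1 : c * (f₀ + dmax2) * (800 * ((n:ℝ)+2) * (R:ℝ)^4) * d 0
        ≤ c * (200 * ((n:ℝ)+2) * (f₀ + dmax2) * (1 + d 0)^2 * (R:ℝ)^4) := by
      have hnn : (0:ℝ) ≤ 200 * (c * (f₀+dmax2) * ((n:ℝ)+2) * (R:ℝ)^4) := by positivity
      have e1 := mul_le_mul_of_nonneg_left h4d hnn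
      linarith only [e1]
    rw [hcK] at h1
    exact le_of_mul_le_mul_right h1 hd0
  -- c(12+4d₀) ≤ 12K/(200(n+2)R⁴)
  have hcd : c * (12 + 4 * d 0) * (200 * ((n:ℝ)+2) * (R:ℝ)^4) ≤ 12 * k₁ ^ ((1:ℝ) + r 0) := by
    have h12 : d 0 * (12 + 4 * d 0) ≤ 12 * (1 + d 0)^2 := by
      linarith only [sq_nonneg (d 0), hd0]
    have hnn : (0:ℝ) ≤ 200 * (c * ((n:ℝ)+2) * (R:ℝ)^4) := by positivity
    have e1 := mul_le_mul_of_nonneg_left h12 hnn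
    have hnn2 : (0:ℝ) ≤ 12 * (200 * (c * ((n:ℝ)+2) * (R:ℝ)^4)) * (1 + d 0)^2 := by positivity
    have e2 := mul_le_mul_of_nonneg_left hfd1 hnn2
    have h1 : c * (12 + 4*d 0) * (200 * ((n:ℝ)+2) * (R:ℝ)^4) * d 0
        ≤ 12 * (c * (200 * ((n:ℝ)+2) * (f₀ + dmax2) * (1 + d 0)^2 * (R:ℝ)^4)) := by
      linarith only [e1, e2]
    rw [hcK] at h1
    have h2 : c * (12 + 4*d 0) * (200 * ((n:ℝ)+2) * (R:ℝ)^4) * d 0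
        ≤ 12 * k₁ ^ ((1:ℝ)+r 0) * d 0 := by
      linarith only [h1]
    exact le_of_mul_le_mul_right h2 hd0
  -- ===== length and power identities =====
  have hRne : (R:ℝ) ≠ 0 := ne_of_gt hR0
  have hRq1_pos : (0:ℝ) < (R:ℝ)^(q+1) := pow_pos hR0 _
  have hRq2_pos : (0:ℝ) < (R:ℝ)^(q+2) := pow_pos hR0 _
  have hlen_eq : len = (b - a) / (R:ℝ)^(q+1) := by
    rw [hlen_def]
    rw [show (-(q:ℤ) - 1) = -((q+1 : ℕ):ℤ) by push_cast; ring, zpow_neg, zpow_natCast]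
    ring
  have hlenpos : 0 < len := by rw [hlen_eq]; positivity
  have hz2 : (R:ℝ)^((1:ℤ)-(q:ℤ)) * (R:ℝ)^(q+1) = (R:ℝ)^2 := by
    rw [← zpow_natCast (R:ℝ) (q+1), ← zpow_natCast (R:ℝ) 2, ← zpow_add₀ hRne]
    congr 1; push_cast; ring
  have hz3 : (R:ℝ)^((1:ℤ)-(q:ℤ)) * (R:ℝ)^(q+2) = (R:ℝ)^3 := by
    rw [← zpow_natCast (R:ℝ) (q+2), ← zpow_natCast (R:ℝ) 3, ← zpow_add₀ hRne]
    congr 1; push_cast; ring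
  have hhilo_eq : hi - lo = (R:ℝ)^2 * len := by
    calc hi - lo = (b-a) * (R:ℝ)^((1:ℤ)-(q:ℤ)) := hI_len
      _ = (b-a) * ((R:ℝ)^((1:ℤ)-(q:ℤ)) * (R:ℝ)^(q+1)) / (R:ℝ)^(q+1) := by
          rw [mul_div_assoc, mul_div_cancel_right₀ _ (ne_of_gt hRq1_pos)]
      _ = (R:ℝ)^2 * ((b-a)/(R:ℝ)^(q+1)) := by rw [hz2]; ring
      _ = (R:ℝ)^2 * len := by rw [hlen_eq]
  have hhilo_pos : 0 < hi - lo := by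
    rw [hhilo_eq]; positivity
  have hhiloR3 : (hi - lo) * ((b-a)⁻¹ * (R:ℝ)^(q+2)) = (R:ℝ)^3 := by
    rw [hI_len]
    rw [show (b-a) * (R:ℝ)^((1:ℤ)-(q:ℤ)) * ((b-a)⁻¹ * (R:ℝ)^(q+2))
      = ((b-a) * (b-a)⁻¹) * ((R:ℝ)^((1:ℤ)-(q:ℤ)) * (R:ℝ)^(q+2)) by ring]
    rw [mul_inv_cancel₀ (ne_of_gt hba), hz3, one_mul]
  -- 2c(b-a)⁻¹R^{q+1} > 0
  have hlow_pos : (0:ℝ) < 2*c*(b-a)⁻¹*(R:ℝ)^(q+1) := by positivity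
  -- c / M^{1+r0} ≤ len/2 when M in range
  have hc_div_le : ∀ M : ℝ, 2*c*(b-a)⁻¹*(R:ℝ)^(q+1) ≤ M ^ ((1:ℝ)+r 0) →
      c / M ^ ((1:ℝ)+r 0) ≤ len / 2 := by
    intro M hlowM
    have hMpos : (0:ℝ) < M ^ ((1:ℝ)+r 0) := lt_of_lt_of_le hlow_pos hlowM
    have h1 : c / M ^ ((1:ℝ)+r 0) ≤ c / (2*c*(b-a)⁻¹*(R:ℝ)^(q+1)) := by
      gcongr
    have h2 : c / (2*c*(b-a)⁻¹*(R:ℝ)^(q+1)) = len / 2 := by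
      rw [hlen_eq]
      field_simp
    linarith only [h1, h2]
  -- ===== exp/rpow upper bound for m =====
  have hexp_pow : ∀ k : ℕ, (R:ℝ)^k = Real.exp (Real.log (R:ℝ) * k) := by
    intro k
    rw [mul_comm, Real.exp_nat_mul, Real.exp_log hR0]
  have hup_gen : ∀ M : ℝ, 0 ≤ M → M ^ ((1:ℝ)+r 0) < 2*c*(b-a)⁻¹*(R:ℝ)^(q+2) →
      M < k₁/28 * Real.exp (β * ((q:ℝ) - 1)) := by
    intro M hM0 hMup
    by_contra hcon
    push_neg at hcon
    have hkpos : (0:ℝ) < k₁/28 * Real.exp (β * ((q:ℝ)-1)) := by positivity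
    have h1 : (k₁/28 * Real.exp (β*((q:ℝ)-1))) ^ ((1:ℝ)+r 0) ≤ M ^ ((1:ℝ)+r 0) :=
      Real.rpow_le_rpow hkpos.le hcon h1r0.le
    have h2 : (k₁/28 * Real.exp (β*((q:ℝ)-1))) ^ ((1:ℝ)+r 0)
        = (k₁/28) ^ ((1:ℝ)+r 0) * Real.exp (β*((q:ℝ)-1)*((1:ℝ)+r 0)) := by
      rw [Real.mul_rpow (by positivity) (Real.exp_pos _).le]
      congr 1
      rw [Real.rpow_def_of_pos (Real.exp_pos _), Real.log_exp]
    have h3 : Real.exp (β*((q:ℝ)-1)*((1:ℝ)+r 0)) * (R:ℝ)^3 = (R:ℝ)^(q+2) := by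
      rw [hexp_pow 3, hexp_pow (q+2), ← Real.exp_add]
      congr 1
      have : β*((q:ℝ)-1)*((1:ℝ)+r 0) = Real.log (R:ℝ) * ((q:ℝ)-1) := by
        rw [hlogR]; ring
      rw [this]; push_cast; ring
    -- (k₁/28)^{1+r0} ≥ k₁^{1+r0}/784
    have h4 : k₁ ^ ((1:ℝ)+r 0) / 784 ≤ (k₁/28) ^ ((1:ℝ)+r 0) := by
      rw [Real.div_rpow hk₁pos.le (by norm_num : (0:ℝ) ≤ 28)]
      have h28 : (28:ℝ) ^ ((1:ℝ)+r 0) ≤ 784 := by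
        have := Real.rpow_le_rpow_of_exponent_le (by norm_num : (1:ℝ) ≤ 28) h1r02
        rwa [show ((2:ℝ)) = ((2:ℕ):ℝ) by norm_num, Real.rpow_natCast,
          show (28:ℝ)^(2:ℕ) = 784 by norm_num] at this
      have h28pos : (0:ℝ) < (28:ℝ) ^ ((1:ℝ)+r 0) := Real.rpow_pos_of_pos (by norm_num) _
      gcongr
    -- combine: K/784 * R^{q+2}/R^3 ≤ M^{1+r0} < 2c(b-a)⁻¹R^{q+2}
    have hR3pos : (0:ℝ) < (R:ℝ)^3 := by positivity
    have h5 : k₁ ^ ((1:ℝ)+r 0) / 784 * ((R:ℝ)^(q+2) / (R:ℝ)^3) ≤ M ^ ((1:ℝ)+r 0) := by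
      have e : Real.exp (β*((q:ℝ)-1)*((1:ℝ)+r 0)) = (R:ℝ)^(q+2) / (R:ℝ)^3 := by
        rw [eq_div_iff (ne_of_gt hR3pos)]; exact h3
      calc k₁ ^ ((1:ℝ)+r 0) / 784 * ((R:ℝ)^(q+2) / (R:ℝ)^3)
          ≤ (k₁/28) ^ ((1:ℝ)+r 0) * ((R:ℝ)^(q+2) / (R:ℝ)^3) := by
            apply mul_le_mul_of_nonneg_right h4 (by positivity)
        _ = (k₁/28 * Real.exp (β*((q:ℝ)-1))) ^ ((1:ℝ)+r 0) := by rw [h2, e]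
        _ ≤ M ^ ((1:ℝ)+r 0) := h1
    have h5' : k₁ ^ ((1:ℝ)+r 0) / 784 * (R:ℝ)^(q+2) ≤ M ^ ((1:ℝ)+r 0) * (R:ℝ)^3 := by
      have e1 := mul_le_mul_of_nonneg_right h5 hR3pos.le
      have e2 : (R:ℝ)^(q+2) / (R:ℝ)^3 * (R:ℝ)^3 = (R:ℝ)^(q+2) := by
        field_simp
      calc k₁ ^ ((1:ℝ)+r 0) / 784 * (R:ℝ)^(q+2)
          = k₁ ^ ((1:ℝ)+r 0) / 784 * ((R:ℝ)^(q+2) / (R:ℝ)^3 * (R:ℝ)^3) := by rw [e2]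
        _ = k₁ ^ ((1:ℝ)+r 0) / 784 * ((R:ℝ)^(q+2) / (R:ℝ)^3) * (R:ℝ)^3 := by ring
        _ ≤ M ^ ((1:ℝ)+r 0) * (R:ℝ)^3 := e1
    have e := mul_lt_mul_of_pos_right hMup hR3pos
    have h7 : 2*c*(b-a)⁻¹*(R:ℝ)^3 ≤ 2*c*(R:ℝ)^4 := by
      have e3 : (b-a)⁻¹ * (R:ℝ)^3 ≤ (R:ℝ) * (R:ℝ)^3 :=
        mul_le_mul_of_nonneg_right hRba.le (by positivity)
      calc 2*c*(b-a)⁻¹*(R:ℝ)^3 = 2*c*((b-a)⁻¹*(R:ℝ)^3) := by ring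
        _ ≤ 2*c*((R:ℝ)*(R:ℝ)^3) := by
            apply mul_le_mul_of_nonneg_left e3 (by positivity)
        _ = 2*c*(R:ℝ)^4 := by ring
    have h8 : 2*c*(R:ℝ)^4 ≤ k₁ ^ ((1:ℝ)+r 0) / 800 := by
      linarith only [hc_le]
    have hin : 2*c*(b-a)⁻¹*(R:ℝ)^3 < k₁ ^ ((1:ℝ)+r 0)/784 := by
      linarith only [h7, h8, hKpos]
    have e2' := mul_lt_mul_of_pos_right hin hRq2_pos
    linarith only [h5', e, e2']
  -- ===== ratio bound =====
  have hratio_gen : ∀ M M' : ℝ, 0 ≤ M → 0 ≤ M' →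
      2*c*(b-a)⁻¹*(R:ℝ)^(q+1) ≤ M ^ ((1:ℝ)+r 0) →
      M' ^ ((1:ℝ)+r 0) < 2*c*(b-a)⁻¹*(R:ℝ)^(q+2) →
      M' < (R:ℝ) * M := by
    intro M M' hM0 hM'0 hlowM hupM'
    by_contra hcon
    push_neg at hcon
    have h1 : ((R:ℝ)*M) ^ ((1:ℝ)+r 0) ≤ M' ^ ((1:ℝ)+r 0) :=
      Real.rpow_le_rpow (by positivity) hcon h1r0.le
    have h2 : ((R:ℝ)*M) ^ ((1:ℝ)+r 0) = (R:ℝ) ^ ((1:ℝ)+r 0) * M ^ ((1:ℝ)+r 0) :=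
      Real.mul_rpow hR0.le hM0
    have h3 : (R:ℝ) ≤ (R:ℝ) ^ ((1:ℝ)+r 0) := by
      have := Real.rpow_le_rpow_of_exponent_le hR1.le (by linarith : (1:ℝ) ≤ 1 + r 0)
      rwa [Real.rpow_one] at this
    have hMpow_nonneg : (0:ℝ) ≤ M ^ ((1:ℝ)+r 0) := Real.rpow_nonneg hM0 _
    have h4 : (R:ℝ) * M ^ ((1:ℝ)+r 0) ≤ (R:ℝ) ^ ((1:ℝ)+r 0) * M ^ ((1:ℝ)+r 0) :=
      mul_le_mul_of_nonneg_right h3 hMpow_nonneg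
    have h5 : (R:ℝ) * (2*c*(b-a)⁻¹*(R:ℝ)^(q+1)) ≤ (R:ℝ) * M ^ ((1:ℝ)+r 0) :=
      mul_le_mul_of_nonneg_left hlowM hR0.le
    have h6 : (R:ℝ) * (2*c*(b-a)⁻¹*(R:ℝ)^(q+1)) = 2*c*(b-a)⁻¹*(R:ℝ)^(q+2) := by
      rw [show q+2 = (q+1)+1 by ring, pow_succ]
      ring
    linarith only [h1, h2, h4, h5, h6, hupM']
  -- ===== per-point estimates =====
  have hpt : ∀ (m j : ℕ) (p : Fin (n+2) → ℤ) (x : ℝ),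
      memVq n bigI φ θ d r f₀ c a b (R:ℝ) q m p →
      1 ≤ j →
      memV n bigI φ θ d r f₀ c a b m j p →
      x ∈ deltaSet (θ 0) c a b (d 0) (r 0) m j (p 0) →
      x ∈ Icc lo hi →
      (1:ℝ) ≤ (m:ℝ) ∧ 51 * d 0 < (m:ℝ) ∧
      |(m:ℝ) * x - (p 0 : ℝ) - θ 0 x| < c / (m:ℝ) ^ (r 0) ∧
      ∃ y ∈ bigI, |x - y| ≤ 7/6 * c / (m:ℝ) ^ ((1:ℝ) + r 0) ∧
        ∀ i : Fin (n+2), i ≠ 0 →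
          |(m:ℝ) * φ x i - (p i : ℝ) - θ i y| ≤ 3 * (f₀ + dmax2) * c / (m:ℝ) ^ (r i) := by
    intro m j p x hVq hj hV hΔ hxJ
    obtain ⟨hBigV, hlowm, hupm⟩ := hVq
    obtain ⟨hm17, -⟩ := hBigV
    have hm51 : 51 * d 0 < (m:ℝ) := by nlinarith only [hm17, hbainv, hd0]
    have hm0 : (0:ℝ) < (m:ℝ) := by linarith only [hm51, hd0]
    have hmnat : 0 < m := by exact_mod_cast hm0
    have hm1 : (1:ℝ) ≤ (m:ℝ) := by exact_mod_cast hmnat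
    have hmr0 : (0:ℝ) < (m:ℝ) ^ (r 0) := Real.rpow_pos_of_pos hm0 _
    have hm1r0 : (m:ℝ) ^ ((1:ℝ) + r 0) = (m:ℝ) * (m:ℝ) ^ (r 0) := by
      rw [Real.rpow_add hm0, Real.rpow_one]
    have hm1r0_pos : (0:ℝ) < (m:ℝ) ^ ((1:ℝ) + r 0) := Real.rpow_pos_of_pos hm0 _
    obtain ⟨hxPiece, hxNear⟩ := hΔ
    rw [pieceI, Set.mem_Icc] at hxPiece
    obtain ⟨hxl, hxu⟩ := hxPiece
    have hxbigI : x ∈ bigI := hbigI_sub (hI_sub hxJ)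
    -- P2
    have P2 : |(m:ℝ) * x - (p 0 : ℝ) - θ 0 x| < c / (m:ℝ) ^ (r 0) := by
      have hid : (m:ℝ)*x - (p 0:ℝ) - θ 0 x = (m:ℝ) * (x - ((p 0:ℝ) + θ 0 x)/(m:ℝ)) := by
        field_simp
        ring
      rw [hid, abs_mul, abs_of_pos hm0]
      calc (m:ℝ) * |x - ((p 0:ℝ) + θ 0 x)/(m:ℝ)|
          < (m:ℝ) * (c / (m:ℝ) ^ ((1:ℝ) + r 0)) := by
            exact mul_lt_mul_of_pos_left hxNear hm0
        _ = c / (m:ℝ) ^ (r 0) := by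
            rw [hm1r0]; field_simp
    -- piece geometry
    have hℓpos : 0 < pieceLen c a b (d 0) (r 0) m := by
      rw [pieceLen]
      exact div_pos (mul_pos hcpos hba) (by positivity)
    have hj1 : (1:ℝ) ≤ (j:ℝ) := by exact_mod_cast hj
    have hul : a + ((j:ℝ)-1) * pieceLen c a b (d 0) (r 0) m
        ≤ min (a + (j:ℝ) * pieceLen c a b (d 0) (r 0) m) b := le_trans hxl hxu
    have humin : min (a + (j:ℝ) * pieceLen c a b (d 0) (r 0) m) b
        ≤ a + ((j:ℝ)-1) * pieceLen c a b (d 0) (r 0) m + pieceLen c a b (d 0) (r 0) m := by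
      calc min (a + (j:ℝ) * pieceLen c a b (d 0) (r 0) m) b
          ≤ a + (j:ℝ) * pieceLen c a b (d 0) (r 0) m := min_le_left _ _
        _ = a + ((j:ℝ)-1) * pieceLen c a b (d 0) (r 0) m + pieceLen c a b (d 0) (r 0) m := by
            ring
    have hxcdef : pieceCenter c a b (d 0) (r 0) m j
        = ((a + ((j:ℝ)-1) * pieceLen c a b (d 0) (r 0) m)
          + min (a + (j:ℝ) * pieceLen c a b (d 0) (r 0) m) b)/2 := rfl
    have hla : a ≤ a + ((j:ℝ)-1) * pieceLen c a b (d 0) (r 0) m := by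
      have h := mul_nonneg (by linarith only [hj1] : (0:ℝ) ≤ (j:ℝ)-1) hℓpos.le
      linarith only [h]
    have hub : min (a + (j:ℝ) * pieceLen c a b (d 0) (r 0) m) b ≤ b := min_le_right _ _
    have hxcmem : pieceCenter c a b (d 0) (r 0) m j ∈ Icc a b := by
      rw [hxcdef]; constructor <;> [linarith; linarith]
    have hxcbigI : pieceCenter c a b (d 0) (r 0) m j ∈ bigI := hbigI_sub hxcmem
    have hxc_near : |x - pieceCenter c a b (d 0) (r 0) m j|
        ≤ pieceLen c a b (d 0) (r 0) m / 2 := by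
      rw [hxcdef, abs_le]; constructor <;> [linarith; linarith]
    -- θ 0 estimate at center
    have hθc : |θ 0 x - θ 0 (pieceCenter c a b (d 0) (r 0) m j)|
        ≤ d 0 * (pieceLen c a b (d 0) (r 0) m / 2) :=
      le_trans (hθ_lip 0 x hxbigI _ hxcbigI)
        (mul_le_mul_of_nonneg_left hxc_near (hd 0).le)
    have hdl : d 0 * (pieceLen c a b (d 0) (r 0) m / 2) = c * (b-a) / (4 * (m:ℝ)^(r 0)) := by
      rw [pieceLen]; field_simp; ring
    -- y and |x - y|
    obtain ⟨hybigI, hVi⟩ := hV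
    have hxy : |x - ((p 0:ℝ) + θ 0 (pieceCenter c a b (d 0) (r 0) m j))/(m:ℝ)|
        ≤ 7/6 * c / (m:ℝ) ^ ((1:ℝ) + r 0) := by
      have hid : x - ((p 0:ℝ) + θ 0 (pieceCenter c a b (d 0) (r 0) m j))/(m:ℝ)
          = (x - ((p 0:ℝ) + θ 0 x)/(m:ℝ))
            + (θ 0 x - θ 0 (pieceCenter c a b (d 0) (r 0) m j))/(m:ℝ) := by
        field_simp; ring
      have h2nd : c * (b-a) / (4 * (m:ℝ)^(r 0)) / (m:ℝ)
          = (b-a)/4 * (c / (m:ℝ) ^ ((1:ℝ)+r 0)) := by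
        rw [hm1r0]; field_simp
      have hcb : (b-a)/4 * (c / (m:ℝ) ^ ((1:ℝ)+r 0)) ≤ 1/12 * (c / (m:ℝ) ^ ((1:ℝ)+r 0)) := by
        apply mul_le_mul_of_nonneg_right (by linarith only [hlen]) (by positivity)
      calc |x - ((p 0:ℝ) + θ 0 (pieceCenter c a b (d 0) (r 0) m j))/(m:ℝ)|
          ≤ |x - ((p 0:ℝ) + θ 0 x)/(m:ℝ)|
            + |θ 0 x - θ 0 (pieceCenter c a b (d 0) (r 0) m j)|/(m:ℝ) := by
            rw [hid]
            refine le_trans (abs_add_le _ _) ?_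
            rw [abs_div, abs_of_pos hm0]
        _ ≤ c / (m:ℝ) ^ ((1:ℝ)+r 0) + c * (b-a) / (4 * (m:ℝ)^(r 0)) / (m:ℝ) := by
            have h1 := hxNear.le
            have h2 : |θ 0 x - θ 0 (pieceCenter c a b (d 0) (r 0) m j)|/(m:ℝ)
                ≤ d 0 * (pieceLen c a b (d 0) (r 0) m / 2) / (m:ℝ) := by
              gcongr
            rw [hdl] at h2
            exact add_le_add h1 h2
        _ = (1 + (b-a)/4) * (c / (m:ℝ) ^ ((1:ℝ)+r 0)) := by rw [h2nd]; ring
        _ ≤ 7/6 * c / (m:ℝ) ^ ((1:ℝ) + r 0) := by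
            have hcm : (0:ℝ) ≤ c / (m:ℝ) ^ ((1:ℝ)+r 0) := by positivity
            have : (1 + (b-a)/4) ≤ 7/6 := by linarith only [hlen, hba]
            calc (1 + (b-a)/4) * (c / (m:ℝ) ^ ((1:ℝ)+r 0))
                ≤ 7/6 * (c / (m:ℝ) ^ ((1:ℝ)+r 0)) :=
                  mul_le_mul_of_nonneg_right this hcm
              _ = 7/6 * c / (m:ℝ) ^ ((1:ℝ) + r 0) := by ring
    refine ⟨hm1, hm51, P2, ((p 0:ℝ) + θ 0 (pieceCenter c a b (d 0) (r 0) m j))/(m:ℝ),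
      hybigI, hxy, ?_⟩
    -- P4
    intro i hi0
    have hVii := hVi i hi0
    have hm1ri : (m:ℝ) ^ ((1:ℝ) + r i) = (m:ℝ) * (m:ℝ) ^ (r i) := by
      rw [Real.rpow_add hm0, Real.rpow_one]
    have hmri : (0:ℝ) < (m:ℝ) ^ (r i) := Real.rpow_pos_of_pos hm0 _
    set y := ((p 0:ℝ) + θ 0 (pieceCenter c a b (d 0) (r 0) m j))/(m:ℝ) with hydef
    have h1 : |(m:ℝ) * φ y i - (p i:ℝ) - θ i y| < (f₀ + d i) * c / (m:ℝ) ^ (r i) := by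
      have hid : (m:ℝ) * φ y i - (p i:ℝ) - θ i y
          = (m:ℝ) * (φ y i - ((p i:ℝ) + θ i y)/(m:ℝ)) := by field_simp; ring
      rw [hid, abs_mul, abs_of_pos hm0]
      calc (m:ℝ) * |φ y i - ((p i:ℝ) + θ i y)/(m:ℝ)|
          < (m:ℝ) * ((f₀ + d i) * c / (m:ℝ) ^ ((1:ℝ) + r i)) :=
            mul_lt_mul_of_pos_left hVii hm0
        _ = (f₀ + d i) * c / (m:ℝ) ^ (r i) := by
            rw [hm1ri]; field_simp
    have h2 : |φ x i - φ y i| ≤ f₀ * |x - y| := hφ_lip i x hxbigI y hybigI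
    have hmono : (m:ℝ) ^ (r i) ≤ (m:ℝ) ^ (r 0) :=
      Real.rpow_le_rpow_of_exponent_le hm1 (hrle i)
    have hid2 : (m:ℝ) * φ x i - (p i:ℝ) - θ i y
        = (m:ℝ) * (φ x i - φ y i) + ((m:ℝ) * φ y i - (p i:ℝ) - θ i y) := by ring
    have hdile : d i ≤ dmax2 := hdmax2_ge i hi0
    calc |(m:ℝ) * φ x i - (p i:ℝ) - θ i y|
        ≤ (m:ℝ) * |φ x i - φ y i| + |(m:ℝ) * φ y i - (p i:ℝ) - θ i y| := by
          rw [hid2]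
          refine le_trans (abs_add_le _ _) ?_
          rw [abs_mul, abs_of_pos hm0]
      _ ≤ (m:ℝ) * (f₀ * (7/6 * c / (m:ℝ) ^ ((1:ℝ)+r 0))) + (f₀ + d i) * c / (m:ℝ) ^ (r i) := by
          refine add_le_add ?_ h1.le
          apply mul_le_mul_of_nonneg_left _ hm0.le
          calc |φ x i - φ y i| ≤ f₀ * |x - y| := h2
            _ ≤ f₀ * (7/6 * c / (m:ℝ) ^ ((1:ℝ)+r 0)) := by
                apply mul_le_mul_of_nonneg_left hxy (by linarith only [hf01])
      _ = 7/6 * f₀ * (c / (m:ℝ)^(r 0)) + (f₀ + d i) * c / (m:ℝ) ^ (r i) := by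
          rw [hm1r0]; field_simp
      _ ≤ 7/6 * f₀ * (c / (m:ℝ)^(r i)) + (f₀ + d i) * c / (m:ℝ) ^ (r i) := by
          have hcc : c / (m:ℝ)^(r 0) ≤ c / (m:ℝ)^(r i) := by gcongr
          have hf0pos : (0:ℝ) ≤ 7/6 * f₀ := by linarith only [hf01]
          have h := mul_le_mul_of_nonneg_left hcc hf0pos
          linarith only [h]
      _ ≤ 3 * (f₀ + dmax2) * c / (m:ℝ) ^ (r i) := by
          have hcm : (0:ℝ) ≤ c / (m:ℝ)^(r i) := by positivity
          have hco : 7/6 * f₀ + (f₀ + d i) ≤ 3 * (f₀ + dmax2) := by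
            linarith only [hdile, hf01, hdmax2pos]
          calc 7/6 * f₀ * (c / (m:ℝ)^(r i)) + (f₀ + d i) * c / (m:ℝ) ^ (r i)
              = (7/6 * f₀ + (f₀ + d i)) * (c / (m:ℝ)^(r i)) := by ring
            _ ≤ 3 * (f₀ + dmax2) * (c / (m:ℝ)^(r i)) :=
                mul_le_mul_of_nonneg_right hco hcm
            _ = 3 * (f₀ + dmax2) * c / (m:ℝ) ^ (r i) := by ring
  -- ===== key pairwise bound =====
  have hkey : ∀ (m j : ℕ) (p : Fin (n+2) → ℤ) (x : ℝ) (m' j' : ℕ)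
      (p' : Fin (n+2) → ℤ) (x' : ℝ),
      memVq n bigI φ θ d r f₀ c a b (R:ℝ) q m p → 1 ≤ j →
      memV n bigI φ θ d r f₀ c a b m j p →
      x ∈ deltaSet (θ 0) c a b (d 0) (r 0) m j (p 0) → x ∈ Icc lo hi →
      memVq n bigI φ θ d r f₀ c a b (R:ℝ) q m' p' → 1 ≤ j' →
      memV n bigI φ θ d r f₀ c a b m' j' p' →
      x' ∈ deltaSet (θ 0) c a b (d 0) (r 0) m' j' (p' 0) → x' ∈ Icc lo hi →
      |x - x'| ≤ 4 * len := by
    intro m j p x m' j' p' x' hVq hj hV hΔ hxJ hVq' hj' hV' hΔ' hx'J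
    obtain ⟨hm1, hm51, hP2, y, hy, hxy, hP4⟩ := hpt m j p x hVq hj hV hΔ hxJ
    obtain ⟨hm1', hm51', hP2', y', hy', hxy', hP4'⟩ := hpt m' j' p' x' hVq' hj' hV' hΔ' hx'J
    have hlowm := hVq.2.1
    have hupm := hVq.2.2
    have hlowm' := hVq'.2.1
    have hupm' := hVq'.2.2
    have hM0 : (0:ℝ) < (m:ℝ) := by linarith only [hm1]
    have hM'0 : (0:ℝ) < (m':ℝ) := by linarith only [hm1']
    have hmr0 : (0:ℝ) < (m:ℝ) ^ (r 0) := Real.rpow_pos_of_pos hM0 _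
    have hm'r0 : (0:ℝ) < (m':ℝ) ^ (r 0) := Real.rpow_pos_of_pos hM'0 _
    have hm1r0 : (m:ℝ) ^ ((1:ℝ) + r 0) = (m:ℝ) * (m:ℝ) ^ (r 0) := by
      rw [Real.rpow_add hM0, Real.rpow_one]
    have hm'1r0 : (m':ℝ) ^ ((1:ℝ) + r 0) = (m':ℝ) * (m':ℝ) ^ (r 0) := by
      rw [Real.rpow_add hM'0, Real.rpow_one]
    have hxbigI : x ∈ bigI := hbigI_sub (hI_sub hxJ)
    have hx'bigI : x' ∈ bigI := hbigI_sub (hI_sub hx'J)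
    by_cases hsame : m = m' ∧ p 0 = p' 0
    · -- same (m, p₀): small diameter
      obtain ⟨hmm, hpp⟩ := hsame
      subst hmm
      rw [← hpp] at hP2'
      have hθd : |θ 0 x - θ 0 x'| ≤ d 0 * |x - x'| := hθ_lip 0 x hxbigI x' hx'bigI
      have hid : (m:ℝ)*(x - x') = ((m:ℝ)*x - (p 0:ℝ) - θ 0 x)
          - ((m:ℝ)*x' - (p 0:ℝ) - θ 0 x') + (θ 0 x - θ 0 x') := by ring
      have habs : (m:ℝ)*|x-x'| ≤ 2*(c/(m:ℝ)^(r 0)) + d 0*|x-x'| := by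
        have h1 : |(m:ℝ)*(x-x')| ≤ |(m:ℝ)*x - (p 0:ℝ) - θ 0 x|
            + |(m:ℝ)*x' - (p 0:ℝ) - θ 0 x'| + |θ 0 x - θ 0 x'| := by
          rw [hid]
          refine le_trans (abs_add_le _ _) ?_
          have := abs_sub ((m:ℝ)*x - (p 0:ℝ) - θ 0 x) ((m:ℝ)*x' - (p 0:ℝ) - θ 0 x')
          linarith
        rw [abs_mul, abs_of_pos hM0] at h1
        linarith only [h1, hP2, hP2', hθd]
      have hTle : |x-x'| ≤ 51/25 * (c/(m:ℝ)^((1:ℝ)+r 0)) := by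
        have h50 : (0:ℝ) < 50/51*(m:ℝ) := by linarith only [hM0]
        have key2 : |x-x'| * (50/51*(m:ℝ)) ≤ 2*(c/(m:ℝ)^(r 0)) := by
          nlinarith only [habs, hm51, hd0, abs_nonneg (x-x')]
        rw [hm1r0, show 51/25 * (c/((m:ℝ)*(m:ℝ)^(r 0)))
          = 2*(c/(m:ℝ)^(r 0)) / (50/51*(m:ℝ)) by field_simp; ring]
        exact (le_div_iff₀ h50).2 key2
      have hcml : c/(m:ℝ)^((1:ℝ)+r 0) ≤ len/2 := hc_div_le (m:ℝ) hlowm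
      linarith only [hTle, hcml, hlenpos]
    · -- distinct: contradiction with hno_sol
      exfalso
      obtain ⟨Qv, hQdef⟩ : ∃ t : ℝ, t = (m:ℝ) + (m':ℝ) := ⟨_, rfl⟩
      have hQpos : (0:ℝ) < Qv := by rw [hQdef]; linarith only [hm1, hm1']
      have hQ2 : (2:ℝ) ≤ Qv := by rw [hQdef]; linarith only [hm1, hm1']
      have hup1 : (m:ℝ) < k₁/28 * Real.exp (β*((q:ℝ)-1)) := hup_gen _ hM0.le hupm
      have hup2 : (m':ℝ) < k₁/28 * Real.exp (β*((q:ℝ)-1)) := hup_gen _ hM'0.le hupm'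
      have hQlt : Qv < Real.exp (β * ((q:ℝ) - 1 - (lam1:ℝ))) := by
        have h14 : k₁/14 ≤ Real.exp (-β*(lam1:ℝ)) := by
          linarith only [hk₁pos, hk₁exp]
        calc Qv < k₁/14 * Real.exp (β*((q:ℝ)-1)) := by
              rw [hQdef]; linarith only [hup1, hup2]
          _ ≤ Real.exp (-β*(lam1:ℝ)) * Real.exp (β*((q:ℝ)-1)) :=
              mul_le_mul_of_nonneg_right h14 (Real.exp_pos _).le
          _ = Real.exp (β * ((q:ℝ) - 1 - (lam1:ℝ))) := by
              rw [← Real.exp_add]; congr 1; ring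
      have hrat1 : (m':ℝ) < (R:ℝ)*(m:ℝ) := hratio_gen _ _ hM0.le hM'0.le hlowm hupm'
      have hrat2 : (m:ℝ) < (R:ℝ)*(m':ℝ) := hratio_gen _ _ hM'0.le hM0.le hlowm' hupm
      have hmlR : (m:ℝ) ≤ (R:ℝ)*(m:ℝ) := le_mul_of_one_le_left hM0.le hR1.le
      have hm'lR : (m':ℝ) ≤ (R:ℝ)*(m':ℝ) := le_mul_of_one_le_left hM'0.le hR1.le
      have hQleM : Qv ≤ 2*(R:ℝ)*(m:ℝ) := by rw [hQdef]; linarith only [hrat1, hmlR]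
      have hQleM' : Qv ≤ 2*(R:ℝ)*(m':ℝ) := by rw [hQdef]; linarith only [hrat2, hm'lR]
      have hQrM : ∀ (M:ℝ), 0 < M → Qv ≤ 2*(R:ℝ)*M → ∀ i : Fin (n+2),
          Qv^(r i) ≤ 2*(R:ℝ)*M^(r i) := by
        intro M hM hle i
        have h2R : (2*(R:ℝ))^(r i) ≤ 2*(R:ℝ) := by
          have := Real.rpow_le_rpow_of_exponent_le
            (by linarith only [hR2] : (1:ℝ) ≤ 2*(R:ℝ))
            (by linarith only [hrle i, hr01] : r i ≤ 1)
          rwa [Real.rpow_one] at this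
        calc Qv^(r i) ≤ (2*(R:ℝ)*M)^(r i) :=
              Real.rpow_le_rpow hQpos.le hle (hr_pos i).le
          _ = (2*(R:ℝ))^(r i)*M^(r i) := Real.mul_rpow (by positivity) hM.le
          _ ≤ 2*(R:ℝ)*M^(r i) :=
              mul_le_mul_of_nonneg_right h2R (Real.rpow_nonneg hM.le _)
      have hQQr : Qv * Qv^(r 0) ≤ 8*c*(b-a)⁻¹*(R:ℝ)^(q+2) := by
        have haux : ∀ M : ℝ, 0 < M → Qv ≤ 2*M →
            M ^ ((1:ℝ)+r 0) < 2*c*(b-a)⁻¹*(R:ℝ)^(q+2) →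
            Qv * Qv^(r 0) ≤ 8*c*(b-a)⁻¹*(R:ℝ)^(q+2) := by
          intro M hM hle hup
          have h2r0 : (2:ℝ)^(r 0) ≤ 2 := by
            have := Real.rpow_le_rpow_of_exponent_le (by norm_num : (1:ℝ) ≤ 2) hr01
            rwa [Real.rpow_one] at this
          have h1 : Qv^(r 0) ≤ (2*M)^(r 0) :=
            Real.rpow_le_rpow hQpos.le hle (hr_pos 0).le
          have h2 : (2*M)^(r 0) = 2^(r 0)*M^(r 0) := Real.mul_rpow (by norm_num) hM.le
          have hMr0 : (0:ℝ) < M^(r 0) := Real.rpow_pos_of_pos hM _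
          have hM1r0 : M ^ ((1:ℝ)+r 0) = M * M^(r 0) := by
            rw [Real.rpow_add hM, Real.rpow_one]
          have h3 : Qv^(r 0) ≤ 2*M^(r 0) := by
            calc Qv^(r 0) ≤ 2^(r 0)*M^(r 0) := by rw [← h2]; exact h1
              _ ≤ 2*M^(r 0) := mul_le_mul_of_nonneg_right h2r0 hMr0.le
          have h4 : Qv * Qv^(r 0) ≤ (2*M)*(2*M^(r 0)) := by
            apply mul_le_mul hle h3 (Real.rpow_nonneg hQpos.le _) (by positivity)
          calc Qv * Qv^(r 0) ≤ (2*M)*(2*M^(r 0)) := h4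
            _ = 4 * (M * M^(r 0)) := by ring
            _ = 4 * M ^ ((1:ℝ)+r 0) := by rw [hM1r0]
            _ ≤ 8*c*(b-a)⁻¹*(R:ℝ)^(q+2) := by linarith only [hup]
        rcases le_total (m':ℝ) (m:ℝ) with hMM | hMM
        · exact haux (m:ℝ) hM0 (by rw [hQdef]; linarith only [hMM]) hupm
        · exact haux (m':ℝ) hM'0 (by rw [hQdef]; linarith only [hMM]) hupm'
      have hQr0_nonneg : (0:ℝ) ≤ Qv^(r 0) := Real.rpow_nonneg hQpos.le _
      have hQr0le : Qv^(r 0) ≤ 4*c*(b-a)⁻¹*(R:ℝ)^(q+2) := by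
        linarith only [mul_le_mul_of_nonneg_right hQ2 hQr0_nonneg, hQQr]
      have hQri_le : ∀ i : Fin (n+2), Qv^(r i) ≤ Qv^(r 0) := fun i =>
        Real.rpow_le_rpow_of_exponent_le (by linarith only [hQ2]) (hrle i)
      have hxx' : |x - x'| ≤ hi - lo := by
        rw [abs_le]; constructor
        · linarith only [hxJ.1, hx'J.2, hxJ.2, hx'J.1]
        · linarith only [hxJ.2, hx'J.1, hxJ.1, hx'J.2]
      have hm'leQ : (m':ℝ) ≤ Qv := by rw [hQdef]; linarith only [hm1]
      -- the difference vector
      refine (hno_sol x hxJ Qv (by linarith only [hQ2]) hQlt)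
        ⟨Fin.cases ((m:ℤ)-(m':ℤ)) (fun i => p i - p' i), ?_, ?_, ?_⟩
      · intro hW0
        apply hsame
        constructor
        · have h0 := congrFun hW0 0
          simp only [Fin.cases_zero, Pi.zero_apply] at h0
          have : (m:ℤ) = (m':ℤ) := by omega
          exact_mod_cast this
        · have h0 := congrFun hW0 (Fin.succ 0)
          simp only [Fin.cases_succ, Pi.zero_apply, sub_eq_zero] at h0
          exact h0
      · simp only [Fin.cases_zero]
        push_cast
        have h1 := abs_sub (m:ℝ) (m':ℝ)
        rw [abs_of_nonneg hM0.le, abs_of_nonneg hM'0.le] at h1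
        rw [hQdef]
        exact h1
      · intro i
        simp only [Fin.cases_zero, Fin.cases_succ]
        push_cast
        have hQri_pos : (0:ℝ) < Qv^(r i) := Real.rpow_pos_of_pos hQpos _
        rw [Real.rpow_neg hQpos.le, ← div_eq_mul_inv, lt_div_iff₀ hQri_pos]
        by_cases hi0 : i = 0
        · -- first coordinate
          subst hi0
          rw [hφ_first x hxbigI]
          have hθd : |θ 0 x - θ 0 x'| ≤ d 0 * |x - x'| := hθ_lip 0 x hxbigI x' hx'bigI
          have hid : ((m:ℝ)-(m':ℝ))*x - ((p 0:ℝ)-(p' 0:ℝ))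
              = ((m:ℝ)*x - (p 0:ℝ) - θ 0 x) - ((m':ℝ)*x' - (p' 0:ℝ) - θ 0 x')
                - (m':ℝ)*(x-x') + (θ 0 x - θ 0 x') := by ring
          have habs : |((m:ℝ)-(m':ℝ))*x - ((p 0:ℝ)-(p' 0:ℝ))|
              ≤ c/(m:ℝ)^(r 0) + c/(m':ℝ)^(r 0) + (m':ℝ)*(hi-lo) + d 0*(hi-lo) := by
            rw [hid]
            have t1 := abs_add_le (((m:ℝ)*x - (p 0:ℝ) - θ 0 x)
              - ((m':ℝ)*x' - (p' 0:ℝ) - θ 0 x') - (m':ℝ)*(x-x')) (θ 0 x - θ 0 x')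
            have t2 := abs_sub (((m:ℝ)*x - (p 0:ℝ) - θ 0 x)
              - ((m':ℝ)*x' - (p' 0:ℝ) - θ 0 x')) ((m':ℝ)*(x-x'))
            have t3 := abs_sub ((m:ℝ)*x - (p 0:ℝ) - θ 0 x) ((m':ℝ)*x' - (p' 0:ℝ) - θ 0 x')
            have t4 : |(m':ℝ)*(x-x')| = (m':ℝ)*|x-x'| := by
              rw [abs_mul, abs_of_pos hM'0]
            have t5 : (m':ℝ)*|x-x'| ≤ (m':ℝ)*(hi-lo) :=
              mul_le_mul_of_nonneg_left hxx' hM'0.le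
            have t6 : d 0*|x-x'| ≤ d 0*(hi-lo) := mul_le_mul_of_nonneg_left hxx' hd0.le
            have t7 := hP2.le
            have t8 := hP2'.le
            linarith only [t1, t2, t3, t4, t5, t6, t7, t8, hθd, abs_nonneg (x - x')]
          -- multiply by Qv^{r 0}
          have u1 : (c/(m:ℝ)^(r 0)) * Qv^(r 0) ≤ 2*(R:ℝ)*c := by
            calc (c/(m:ℝ)^(r 0)) * Qv^(r 0)
                ≤ (c/(m:ℝ)^(r 0)) * (2*(R:ℝ)*(m:ℝ)^(r 0)) :=
                  mul_le_mul_of_nonneg_left (hQrM _ hM0 hQleM 0) (by positivity)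
              _ = 2*(R:ℝ)*c := by field_simp
          have u2 : (c/(m':ℝ)^(r 0)) * Qv^(r 0) ≤ 2*(R:ℝ)*c := by
            calc (c/(m':ℝ)^(r 0)) * Qv^(r 0)
                ≤ (c/(m':ℝ)^(r 0)) * (2*(R:ℝ)*(m':ℝ)^(r 0)) :=
                  mul_le_mul_of_nonneg_left (hQrM _ hM'0 hQleM' 0) (by positivity)
              _ = 2*(R:ℝ)*c := by field_simp
          have u3 : ((m':ℝ)*(hi-lo)) * Qv^(r 0) ≤ 8*c*(R:ℝ)^3 := by
            calc ((m':ℝ)*(hi-lo)) * Qv^(r 0) = (hi-lo) * ((m':ℝ) * Qv^(r 0)) := by ring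
              _ ≤ (hi-lo) * (Qv * Qv^(r 0)) := by
                  apply mul_le_mul_of_nonneg_left _ hhilo_pos.le
                  exact mul_le_mul_of_nonneg_right hm'leQ hQr0_nonneg
              _ ≤ (hi-lo) * (8*c*(b-a)⁻¹*(R:ℝ)^(q+2)) :=
                  mul_le_mul_of_nonneg_left hQQr hhilo_pos.le
              _ = 8*c*((hi-lo) * ((b-a)⁻¹*(R:ℝ)^(q+2))) := by ring
              _ = 8*c*(R:ℝ)^3 := by rw [hhiloR3]
          have u4 : (d 0*(hi-lo)) * Qv^(r 0) ≤ 4*(d 0)*c*(R:ℝ)^3 := by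
            calc (d 0*(hi-lo)) * Qv^(r 0) ≤ (d 0*(hi-lo)) * (4*c*(b-a)⁻¹*(R:ℝ)^(q+2)) := by
                  apply mul_le_mul_of_nonneg_left hQr0le (by positivity)
              _ = 4*(d 0)*c*((hi-lo) * ((b-a)⁻¹*(R:ℝ)^(q+2))) := by ring
              _ = 4*(d 0)*c*(R:ℝ)^3 := by rw [hhiloR3]
          have hsum : |((m:ℝ)-(m':ℝ))*x - ((p 0:ℝ)-(p' 0:ℝ))| * Qv^(r 0)
              ≤ (12 + 4*d 0)*c*(R:ℝ)^3 := by
            have hRsq4 : (4:ℝ) ≤ (R:ℝ)^2 := by nlinarith only [hR2]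
            have hRc : (R:ℝ)*c ≤ (R:ℝ)^3*c := by
              have h := mul_le_mul_of_nonneg_right hRsq4 (mul_nonneg hR0.le hcpos.le)
              have h2 := mul_pos hR0 hcpos
              nlinarith only [h, h2]
            have hmul := mul_le_mul_of_nonneg_right habs hQr0_nonneg
            calc |((m:ℝ)-(m':ℝ))*x - ((p 0:ℝ)-(p' 0:ℝ))| * Qv^(r 0)
                ≤ (c/(m:ℝ)^(r 0) + c/(m':ℝ)^(r 0) + (m':ℝ)*(hi-lo) + d 0*(hi-lo)) * Qv^(r 0) :=
                  hmul
              _ = (c/(m:ℝ)^(r 0))*Qv^(r 0) + (c/(m':ℝ)^(r 0))*Qv^(r 0)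
                  + ((m':ℝ)*(hi-lo))*Qv^(r 0) + (d 0*(hi-lo))*Qv^(r 0) := by ring
              _ ≤ 2*(R:ℝ)*c + 2*(R:ℝ)*c + 8*c*(R:ℝ)^3 + 4*(d 0)*c*(R:ℝ)^3 := by
                  linarith only [u1, u2, u3, u4]
              _ ≤ (12 + 4*d 0)*c*(R:ℝ)^3 := by linarith only [hRc]
          have hfin : (12 + 4*d 0)*c*(R:ℝ)^3 < k₁/((n:ℝ)+2) := by
            have hR43 : 2*(R:ℝ)^3 ≤ (R:ℝ)^4 := by
              nlinarith only [hR2, pow_pos hR0 3, hR0]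
            have hcnn : (0:ℝ) ≤ c*(12+4*d 0)*((n:ℝ)+2) := by positivity
            rw [lt_div_iff₀ (by linarith only [hn2] : (0:ℝ) < (n:ℝ)+2)]
            linarith only [hcd, hKle, hk₁pos, mul_le_mul_of_nonneg_left hR43 hcnn]
          linarith only [hsum, hfin]
        · -- other coordinates
          have hPi := hP4 i hi0
          have hPi' := hP4' i hi0
          have hdile : d i ≤ dmax2 := hdmax2_ge i hi0
          have hφd : |φ x i - φ x' i| ≤ f₀*(hi-lo) := by
            calc |φ x i - φ x' i| ≤ f₀ * |x - x'| := hφ_lip i x hxbigI x' hx'bigI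
              _ ≤ f₀*(hi-lo) := mul_le_mul_of_nonneg_left hxx' (by linarith only [hf01])
          -- |y - y'| ≤ 2(hi - lo)
          have hR2sq : (4:ℝ) ≤ (R:ℝ)^2 := by nlinarith only [hR2]
          have hlen_hilo : 4*len ≤ hi - lo := by
            rw [hhilo_eq]; nlinarith only [hR2sq, hlenpos]
          have hxy_half : |x - y| ≤ (hi-lo)/2 := by
            have h1 : c/(m:ℝ)^((1:ℝ)+r 0) ≤ len/2 := hc_div_le (m:ℝ) hlowm
            have h2 : 7/6 * c / (m:ℝ)^((1:ℝ)+r 0) = 7/6 * (c/(m:ℝ)^((1:ℝ)+r 0)) := by ring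
            rw [h2] at hxy
            linarith only [hxy, h1, hlen_hilo, hlenpos, hhilo_pos]
          have hx'y'_half : |x' - y'| ≤ (hi-lo)/2 := by
            have h1 : c/(m':ℝ)^((1:ℝ)+r 0) ≤ len/2 := hc_div_le (m':ℝ) hlowm'
            have h2 : 7/6 * c / (m':ℝ)^((1:ℝ)+r 0) = 7/6 * (c/(m':ℝ)^((1:ℝ)+r 0)) := by ring
            rw [h2] at hxy'
            linarith only [hxy', h1, hlen_hilo, hlenpos, hhilo_pos]
          have hyy' : |y - y'| ≤ 2*(hi-lo) := by
            have hid : y - y' = -(x - y) + (x - x') + (x' - y') := by ring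
            calc |y - y'| = |(-(x-y)) + ((x - x') + (x' - y'))| := by rw [hid]; ring_nf
              _ ≤ |(-(x-y))| + |(x - x') + (x' - y')| := abs_add_le _ _
              _ ≤ |(-(x-y))| + (|x - x'| + |x' - y'|) := by
                  linarith only [abs_add_le (x - x') (x' - y')]
              _ = |x-y| + |x - x'| + |x' - y'| := by rw [abs_neg]; ring
              _ ≤ 2*(hi-lo) := by linarith only [hxy_half, hx'y'_half, hxx']
          have hθyy : |θ i y - θ i y'| ≤ dmax2 * (2*(hi-lo)) := by
            calc |θ i y - θ i y'| ≤ d i * |y - y'| := hθ_lip i y hy y' hy'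
              _ ≤ dmax2 * |y - y'| :=
                  mul_le_mul_of_nonneg_right hdile (abs_nonneg _)
              _ ≤ dmax2 * (2*(hi-lo)) :=
                  mul_le_mul_of_nonneg_left hyy' hdmax2pos.le
          have hid : ((m:ℝ)-(m':ℝ))*φ x i - ((p i:ℝ)-(p' i:ℝ))
              = ((m:ℝ)*φ x i - (p i:ℝ) - θ i y) - ((m':ℝ)*φ x' i - (p' i:ℝ) - θ i y')
                - (m':ℝ)*(φ x i - φ x' i) + (θ i y - θ i y') := by ring
          have habs : |((m:ℝ)-(m':ℝ))*φ x i - ((p i:ℝ)-(p' i:ℝ))|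
              ≤ 3*(f₀+dmax2)*(c/(m:ℝ)^(r i)) + 3*(f₀+dmax2)*(c/(m':ℝ)^(r i))
                + (m':ℝ)*(f₀*(hi-lo)) + dmax2*(2*(hi-lo)) := by
            rw [hid]
            have t1 := abs_add_le (((m:ℝ)*φ x i - (p i:ℝ) - θ i y)
              - ((m':ℝ)*φ x' i - (p' i:ℝ) - θ i y') - (m':ℝ)*(φ x i - φ x' i))
              (θ i y - θ i y')
            have t2 := abs_sub (((m:ℝ)*φ x i - (p i:ℝ) - θ i y)
              - ((m':ℝ)*φ x' i - (p' i:ℝ) - θ i y')) ((m':ℝ)*(φ x i - φ x' i))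
            have t3 := abs_sub ((m:ℝ)*φ x i - (p i:ℝ) - θ i y)
              ((m':ℝ)*φ x' i - (p' i:ℝ) - θ i y')
            have t4 : |(m':ℝ)*(φ x i - φ x' i)| ≤ (m':ℝ)*(f₀*(hi-lo)) := by
              rw [abs_mul, abs_of_pos hM'0]
              exact mul_le_mul_of_nonneg_left hφd hM'0.le
            have t7 : |(m:ℝ)*φ x i - (p i:ℝ) - θ i y| ≤ 3*(f₀+dmax2)*(c/(m:ℝ)^(r i)) := by
              have := hPi
              calc |(m:ℝ)*φ x i - (p i:ℝ) - θ i y|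
                  ≤ 3*(f₀+dmax2)*c/(m:ℝ)^(r i) := this
                _ = 3*(f₀+dmax2)*(c/(m:ℝ)^(r i)) := by ring
            have t8 : |(m':ℝ)*φ x' i - (p' i:ℝ) - θ i y'|
                ≤ 3*(f₀+dmax2)*(c/(m':ℝ)^(r i)) := by
              calc |(m':ℝ)*φ x' i - (p' i:ℝ) - θ i y'|
                  ≤ 3*(f₀+dmax2)*c/(m':ℝ)^(r i) := hPi'
                _ = 3*(f₀+dmax2)*(c/(m':ℝ)^(r i)) := by ring
            linarith only [t1, t2, t3, t4, t7, t8, hθyy]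
          -- multiply by Qv^{r i}
          have hmri : (0:ℝ) < (m:ℝ)^(r i) := Real.rpow_pos_of_pos hM0 _
          have hm'ri : (0:ℝ) < (m':ℝ)^(r i) := Real.rpow_pos_of_pos hM'0 _
          have u1 : (c/(m:ℝ)^(r i)) * Qv^(r i) ≤ 2*(R:ℝ)*c := by
            calc (c/(m:ℝ)^(r i)) * Qv^(r i)
                ≤ (c/(m:ℝ)^(r i)) * (2*(R:ℝ)*(m:ℝ)^(r i)) :=
                  mul_le_mul_of_nonneg_left (hQrM _ hM0 hQleM i) (by positivity)
              _ = 2*(R:ℝ)*c := by field_simp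
          have u2 : (c/(m':ℝ)^(r i)) * Qv^(r i) ≤ 2*(R:ℝ)*c := by
            calc (c/(m':ℝ)^(r i)) * Qv^(r i)
                ≤ (c/(m':ℝ)^(r i)) * (2*(R:ℝ)*(m':ℝ)^(r i)) :=
                  mul_le_mul_of_nonneg_left (hQrM _ hM'0 hQleM' i) (by positivity)
              _ = 2*(R:ℝ)*c := by field_simp
          have u3 : ((m':ℝ)*(f₀*(hi-lo))) * Qv^(r i) ≤ 8*f₀*c*(R:ℝ)^3 := by
            have hQri_nonneg : (0:ℝ) ≤ Qv^(r i) := (Real.rpow_pos_of_pos hQpos _).le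
            calc ((m':ℝ)*(f₀*(hi-lo))) * Qv^(r i)
                = (f₀*(hi-lo)) * ((m':ℝ) * Qv^(r i)) := by ring
              _ ≤ (f₀*(hi-lo)) * (Qv * Qv^(r 0)) := by
                  apply mul_le_mul_of_nonneg_left _
                    (mul_nonneg (by linarith only [hf01]) hhilo_pos.le)
                  have hA : (m':ℝ) * Qv^(r i) ≤ Qv * Qv^(r i) :=
                    mul_le_mul_of_nonneg_right hm'leQ hQri_nonneg
                  have hB : Qv * Qv^(r i) ≤ Qv * Qv^(r 0) :=
                    mul_le_mul_of_nonneg_left (hQri_le i) hQpos.le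
                  linarith
              _ ≤ (f₀*(hi-lo)) * (8*c*(b-a)⁻¹*(R:ℝ)^(q+2)) := by
                  apply mul_le_mul_of_nonneg_left hQQr
                    (mul_nonneg (by linarith only [hf01]) hhilo_pos.le)
              _ = 8*f₀*c*((hi-lo) * ((b-a)⁻¹*(R:ℝ)^(q+2))) := by ring
              _ = 8*f₀*c*(R:ℝ)^3 := by rw [hhiloR3]
          have u4 : (dmax2*(2*(hi-lo))) * Qv^(r i) ≤ 8*dmax2*c*(R:ℝ)^3 := by
            have h1 : Qv^(r i) ≤ 4*c*(b-a)⁻¹*(R:ℝ)^(q+2) := le_trans (hQri_le i) hQr0le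
            calc (dmax2*(2*(hi-lo))) * Qv^(r i)
                ≤ (dmax2*(2*(hi-lo))) * (4*c*(b-a)⁻¹*(R:ℝ)^(q+2)) := by
                  apply mul_le_mul_of_nonneg_left h1
                    (mul_nonneg hdmax2pos.le (by linarith only [hhilo_pos]))
              _ = 8*dmax2*c*((hi-lo) * ((b-a)⁻¹*(R:ℝ)^(q+2))) := by ring
              _ = 8*dmax2*c*(R:ℝ)^3 := by rw [hhiloR3]
          have hsum : |((m:ℝ)-(m':ℝ))*φ x i - ((p i:ℝ)-(p' i:ℝ))| * Qv^(r i)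
              ≤ 20*(f₀+dmax2)*c*(R:ℝ)^3 := by
            have hQri_nonneg : (0:ℝ) ≤ Qv^(r i) := (Real.rpow_pos_of_pos hQpos _).le
            have hmul := mul_le_mul_of_nonneg_right habs hQri_nonneg
            have hRc : (R:ℝ)*c ≤ (R:ℝ)^3*c := by
              have h := mul_le_mul_of_nonneg_right hR2sq (mul_nonneg hR0.le hcpos.le)
              have h2 := mul_pos hR0 hcpos
              nlinarith only [h, h2]
            calc |((m:ℝ)-(m':ℝ))*φ x i - ((p i:ℝ)-(p' i:ℝ))| * Qv^(r i)
                ≤ (3*(f₀+dmax2)*(c/(m:ℝ)^(r i)) + 3*(f₀+dmax2)*(c/(m':ℝ)^(r i))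
                  + (m':ℝ)*(f₀*(hi-lo)) + dmax2*(2*(hi-lo))) * Qv^(r i) := hmul
              _ = 3*(f₀+dmax2)*((c/(m:ℝ)^(r i))*Qv^(r i))
                  + 3*(f₀+dmax2)*((c/(m':ℝ)^(r i))*Qv^(r i))
                  + ((m':ℝ)*(f₀*(hi-lo)))*Qv^(r i) + (dmax2*(2*(hi-lo)))*Qv^(r i) := by ring
              _ ≤ 3*(f₀+dmax2)*(2*(R:ℝ)*c) + 3*(f₀+dmax2)*(2*(R:ℝ)*c)
                  + 8*f₀*c*(R:ℝ)^3 + 8*dmax2*c*(R:ℝ)^3 := by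
                  have w1 := mul_le_mul_of_nonneg_left u1
                    (by linarith only [hf01, hdmax2pos] : (0:ℝ) ≤ 3*(f₀+dmax2))
                  have w2 := mul_le_mul_of_nonneg_left u2
                    (by linarith only [hf01, hdmax2pos] : (0:ℝ) ≤ 3*(f₀+dmax2))
                  linarith only [w1, w2, u3, u4]
              _ ≤ 20*(f₀+dmax2)*c*(R:ℝ)^3 := by
                  linarith only [mul_le_mul_of_nonneg_left hRc
                    (by linarith only [hf01, hdmax2pos] : (0:ℝ) ≤ 12*(f₀+dmax2))]
          have hfin : 20*(f₀+dmax2)*c*(R:ℝ)^3 < k₁/((n:ℝ)+2) := by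
            have hR43 : 2*(R:ℝ)^3 ≤ (R:ℝ)^4 := by
              nlinarith only [hR2, pow_pos hR0 3, hR0]
            have hcnn : (0:ℝ) ≤ c*(f₀+dmax2)*((n:ℝ)+2) := by
              have := mul_nonneg (mul_nonneg hcpos.le
                (by linarith only [hf01, hdmax2pos] : (0:ℝ) ≤ f₀+dmax2))
                (by linarith only [hn2] : (0:ℝ) ≤ (n:ℝ)+2)
              linarith only [this]
            rw [lt_div_iff₀ (by linarith only [hn2] : (0:ℝ) < (n:ℝ)+2)]
            linarith only [hcf, hKle, hk₁pos, mul_le_mul_of_nonneg_left hR43 hcnn]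
          linarith only [hsum, hfin]
  -- ===== membership of subintervals in J =====
  have hJmem : ∀ (k:ℕ), k < R^2 → ∀ z:ℝ,
      z ∈ Icc (lo + (k:ℝ)*len) (lo + ((k:ℝ)+1)*len) → z ∈ Icc lo hi := by
    intro k hkR z hz
    have h1 : (0:ℝ) ≤ (k:ℝ) := Nat.cast_nonneg k
    have h2 : (k:ℝ)+1 ≤ (R:ℝ)^2 := by
      have hn : k + 1 ≤ R^2 := hkR
      calc (k:ℝ)+1 = ((k+1:ℕ):ℝ) := by push_cast; ring
        _ ≤ ((R^2:ℕ):ℝ) := Nat.cast_le.2 hn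
        _ = (R:ℝ)^2 := by push_cast; ring
    obtain ⟨hz1, hz2⟩ := hz
    constructor
    · have h3 := mul_nonneg h1 hlenpos.le
      linarith only [hz1, h3]
    · have h3 : ((k:ℝ)+1)*len ≤ (R:ℝ)^2*len := mul_le_mul_of_nonneg_right h2 hlenpos.le
      linarith only [hz2, h3, hhilo_eq]
  -- ===== counting =====
  have hcount : ∀ (S : Set ℕ), (∀ k ∈ S, ∀ k' ∈ S, k ≤ k' → k' ≤ k + 5) →
      S.encard ≤ 6 := by
    intro S hS
    rcases S.eq_empty_or_nonempty with rfl | hne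
    · simp
    · have h0 : sInf S ∈ S := Nat.sInf_mem hne
      have hsub : S ⊆ Set.Icc (sInf S) (sInf S + 5) := by
        intro k hk
        exact ⟨Nat.sInf_le hk, hS _ h0 _ hk (Nat.sInf_le hk)⟩
      have hicc : (Set.Icc (sInf S) (sInf S + 5)).encard = 6 := by
        have h : (Finset.Icc (sInf S) (sInf S+5)).card = 6 := by
          rw [Nat.card_Icc]; omega
        rw [← Finset.coe_Icc, Set.encard_coe_eq_coe_finsetCard, h]; rfl
      exact le_trans (Set.encard_mono hsub) (le_of_eq hicc)
  apply hcount
  intro k hk k' hk' hkk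
  simp only [Set.mem_setOf_eq] at hk hk'
  obtain ⟨hkR, x, hx1, hx2⟩ := hk
  obtain ⟨hkR', x', hx'1, hx'2⟩ := hk'
  simp only [Set.mem_iUnion] at hx2 hx'2
  obtain ⟨m, p, j, ⟨hVq, hj1, hjm, hV⟩, hΔ⟩ := hx2
  obtain ⟨m', p', j', ⟨hVq', hj1', hjm', hV'⟩, hΔ'⟩ := hx'2
  have hxJ : x ∈ Icc lo hi := hJmem k hkR x hx1
  have hx'J : x' ∈ Icc lo hi := hJmem k' hkR' x' hx'1
  have hdist := hkey m j p x m' j' p' x' hVq hj1 hV hΔ hxJ hVq' hj1' hV' hΔ' hx'J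
  by_contra hcon
  push_neg at hcon
  have hk6 : (k:ℝ) + 6 ≤ (k':ℝ) := by
    have : k + 6 ≤ k' := by omega
    exact_mod_cast this
  have h6 := mul_le_mul_of_nonneg_right hk6 hlenpos.le
  have h5 : x' - x ≤ 4*len := by
    have h7 := le_abs_self (x' - x)
    rw [abs_sub_comm] at h7
    linarith only [h7, hdist]
  obtain ⟨hxa, hxb⟩ := hx1
  obtain ⟨hxa', hxb'⟩ := hx'1
  linarith only [h5, h6, hxb, hxa', hlenpos]
end

section
/- With the notation of the context (two generalized Cantor constructions on I₀, with Ĵ_q = ⋃_{p=0}^q Ĵ_{p,q}, M_{p,q} ⊆ ℐ_{q+1}, and Ĵ′_{p,q} := ℐ′_{q+1} ∩ (M_{p,q} ∪ Ĵ_{p,q})), for all 0 ≤ p ≤ q one has h′_{p,q} ≤ h_{p,q} + f_{p,q}, where h_{p,q} := max_{J ∈ 𝒥_p} #{I ∈ Ĵ_{p,q} : I ⊆ J}, f_{p,q} := max_{J ∈ 𝒥_p} #{I ∈ M_{p,q} : I ⊆ J}, and h′_{p,q} := max_{J ∈ 𝒥′_p} #{I ∈ Ĵ′_{p,q} : I ⊆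 J} (each maximum taken to be 0 over an empty collection). -/
/- STATEMENT 15: the counting inequality `h′_{p,q} ≤ h_{p,q} + f_{p,q}` for the
two generalized Cantor constructions. -/

open Set
open scoped ENNReal

/-- the `R`-partition of a closed interval into `R` closed subintervals of
equal length. -/
def parR (R : ℕ) (A : Set ℝ) : Set (Set ℝ) :=
  {J | ∃ x y : ℝ, A = Icc x y ∧
    ∃ k : ℕ, k < R ∧
      J = Icc (x + (k : ℝ) * ((y - x) / R)) (x + ((k : ℝ) + 1) * ((y - x) / R))}

/-- the `R`-partition of a collection of closed intervals. -/
def parRs (R : ℕ) (𝒞 : Set (Set ℝ)) : Set (Set ℝ) := ⋃ A ∈ 𝒞, parR R A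

theorem stmt15 (R : ℕ) (hR : 2 ≤ R) (a b : ℝ) (hab : a ≤ b)
    (J J' : ℕ → Set (Set ℝ)) (Jhatpq Mpq Jhat'pq : ℕ → ℕ → Set (Set ℝ))
    -- the unprimed generalized Cantor construction
    (hJ0 : J 0 = {Icc a b})
    (hJhat_sub : ∀ p q, p ≤ q → Jhatpq p q ⊆ parRs R (J q))
    (hM_sub : ∀ p q, p ≤ q → Mpq p q ⊆ parRs R (J q))
    (hJsucc : ∀ q, J (q + 1) = parRs R (J q) \ ⋃ p ∈ Finset.Iic q, Jhatpq p q)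
    -- the primed construction
    (hJ'0 : J' 0 = {Icc a b})
    (hJhat' : ∀ p q, p ≤ q → Jhat'pq p q = parRs R (J' q) ∩ (Mpq p q ∪ Jhatpq p q))
    (hJ'succ : ∀ q, J' (q + 1) = parRs R (J' q) \ ⋃ p ∈ Finset.Iic q, Jhat'pq p q) :
    ∀ p q : ℕ, p ≤ q →
      (⨆ K ∈ J' p, Set.encard {I | I ∈ Jhat'pq p q ∧ I ⊆ K})
        ≤ (⨆ K ∈ J p, Set.encard {I | I ∈ Jhatpq p q ∧ I ⊆ K})
          + (⨆ K ∈ J p, Set.encard {I | I ∈ Mpq p q ∧ I ⊆ K}) := by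
  -- `parRs` is monotone
  have hmono : ∀ s t : Set (Set ℝ), s ⊆ t → parRs R s ⊆ parRs R t := by
    intro s t hst
    exact Set.biUnion_subset_biUnion_left hst
  -- `J' q ⊆ J q`
  have hsub : ∀ q, J' q ⊆ J q := by
    intro q
    induction q with
    | zero => rw [hJ0, hJ'0]
    | succ q ih =>
      rw [hJsucc, hJ'succ]
      rintro I ⟨hI, hI'⟩
      have hIpar : I ∈ parRs R (J q) := hmono _ _ ih hI
      refine ⟨hIpar, ?_⟩
      intro hmem
      apply hI'
      simp only [Set.mem_iUnion, Finset.mem_Iic] at hmem ⊢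
      obtain ⟨p, hpq, hIp⟩ := hmem
      refine ⟨p, hpq, ?_⟩
      rw [hJhat' p q hpq]
      exact ⟨hI, Or.inr hIp⟩
  intro p q hpq
  refine iSup₂_le fun K hK => ?_
  have hKJ : K ∈ J p := hsub p hK
  have hsplit : {I | I ∈ Jhat'pq p q ∧ I ⊆ K} ⊆
      {I | I ∈ Jhatpq p q ∧ I ⊆ K} ∪ {I | I ∈ Mpq p q ∧ I ⊆ K} := by
    rintro I ⟨hI, hIK⟩
    rw [hJhat' p q hpq] at hI
    rcases hI.2 with h | h
    · exact Or.inr ⟨h, hIK⟩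
    · exact Or.inl ⟨h, hIK⟩
  calc Set.encard {I | I ∈ Jhat'pq p q ∧ I ⊆ K}
      ≤ Set.encard ({I | I ∈ Jhatpq p q ∧ I ⊆ K} ∪ {I | I ∈ Mpq p q ∧ I ⊆ K}) :=
        Set.encard_mono hsplit
    _ ≤ Set.encard {I | I ∈ Jhatpq p q ∧ I ⊆ K} + Set.encard {I | I ∈ Mpq p q ∧ I ⊆ K} :=
        Set.encard_union_le _ _
    _ ≤ _ := add_le_add (le_iSup₂ (f := fun K _ => Set.encard {I | I ∈ Jhatpq p q ∧ I ⊆ K}) K hKJ)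
        (le_iSup₂ (f := fun K _ => Set.encard {I | I ∈ Mpq p q ∧ I ⊆ K}) K hKJ)
end
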